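/- arXiv:2108.01633 — 7 statements merged into one kernel-verified Lean document; each statement's English description precedes it below -/
import Mathlib

section
/- If G is a non-empty graph, then χ(G) ≤ (2 + log(|V(G)|/ρ(G)))·ρ(G), where ρ(G) is the Hall ratio of G, i.e., the maximum over all non-empty subgraphs H of G of |V(H)|/α(H). -/
open SimpleGraph

/-- The independence number of the subgraph of `G` induced on `S`. -/
noncomputable def indepNumOn {V : Type*} (G : SimpleGraph V) (S : Set V) : ℕ :=
  sSup {n | ∃ I : Set V, I ⊆ S ∧ (∀ u ∈ I, ∀ v ∈ I, ¬ G.Adj u v) ∧ I.ncard = n}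

/-- The Hall ratio of `G`: the maximum of `|V(H)|/α(H)` over non-empty subgraphs `H`. -/
noncomputable def hallRatio {V : Type*} (G : SimpleGraph V) : ℝ :=
  sSup {x : ℝ | ∃ S : Set V, S.Nonempty ∧ x = (S.ncard : ℝ) / (indepNumOn G S : ℝ)}

section Aux

variable {V : Type*} [Fintype V]

lemma indepSet_bddAbove (G : SimpleGraph V) (S : Set V) :
    BddAbove {n | ∃ I : Set V, I ⊆ S ∧ (∀ u ∈ I, ∀ v ∈ I, ¬ G.Adj u v) ∧ I.ncard = n} := by
  refine ⟨Fintype.card V, fun n hn => ?_⟩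
  obtain ⟨I, -, -, rfl⟩ := hn
  calc I.ncard ≤ (Set.univ : Set V).ncard :=
        Set.ncard_le_ncard (Set.subset_univ I) Set.finite_univ
    _ = Fintype.card V := by rw [Set.ncard_univ, Nat.card_eq_fintype_card]

lemma indepNumOn_attained (G : SimpleGraph V) (S : Set V) :
    ∃ I : Set V, I ⊆ S ∧ (∀ u ∈ I, ∀ v ∈ I, ¬ G.Adj u v) ∧ I.ncard = indepNumOn G S :=
  by
    refine Nat.sSup_mem ⟨0, ?_⟩ (indepSet_bddAbove G S)
    exact ⟨∅, Set.empty_subset S, by simp, Set.ncard_empty V⟩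

lemma one_le_indepNumOn (G : SimpleGraph V) {S : Set V} (hS : S.Nonempty) :
    1 ≤ indepNumOn G S := by
  obtain ⟨v, hv⟩ := hS
  exact le_csSup (indepSet_bddAbove G S)
    ⟨{v}, Set.singleton_subset_iff.2 hv, by simp, Set.ncard_singleton v⟩

lemma indepNumOn_singleton (G : SimpleGraph V) (v : V) : indepNumOn G {v} = 1 := by
  refine le_antisymm (csSup_le ⟨0, ∅, Set.empty_subset _, by simp, Set.ncard_empty V⟩ ?_)
    (one_le_indepNumOn G ⟨v, rfl⟩)
  rintro n ⟨I, hI, -, rfl⟩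
  calc I.ncard ≤ ({v} : Set V).ncard := Set.ncard_le_ncard hI (Set.toFinite _)
    _ = 1 := Set.ncard_singleton v

lemma hallRatio_bddAbove (G : SimpleGraph V) :
    BddAbove {x : ℝ | ∃ S : Set V, S.Nonempty ∧ x = (S.ncard : ℝ) / (indepNumOn G S : ℝ)} := by
  refine ⟨Fintype.card V, ?_⟩
  rintro x ⟨S, hS, rfl⟩
  have h1 : (1 : ℝ) ≤ (indepNumOn G S : ℝ) := by exact_mod_cast one_le_indepNumOn G hS
  calc (S.ncard : ℝ) / (indepNumOn G S : ℝ) ≤ (S.ncard : ℝ) :=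
        div_le_self (by positivity) h1
    _ ≤ (Fintype.card V : ℝ) := by
        have : S.ncard ≤ Fintype.card V := by
          calc S.ncard ≤ (Set.univ : Set V).ncard :=
                Set.ncard_le_ncard (Set.subset_univ S) Set.finite_univ
            _ = Fintype.card V := by rw [Set.ncard_univ, Nat.card_eq_fintype_card]
        exact_mod_cast this

lemma one_le_hallRatio (G : SimpleGraph V) [Nonempty V] : 1 ≤ hallRatio G := by
  obtain ⟨v⟩ := ‹Nonempty V›
  have hmem : (1 : ℝ) ∈ {x : ℝ | ∃ S : Set V, S.Nonempty ∧
      x = (S.ncard : ℝ) / (indepNumOn G S : ℝ)} := by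
    refine ⟨{v}, ⟨v, rfl⟩, ?_⟩
    rw [indepNumOn_singleton, Set.ncard_singleton]
    norm_num
  exact le_csSup (hallRatio_bddAbove G) hmem

lemma hallRatio_le_card (G : SimpleGraph V) [Nonempty V] :
    hallRatio G ≤ (Fintype.card V : ℝ) := by
  obtain ⟨v⟩ := ‹Nonempty V›
  refine csSup_le ⟨(1:ℝ), {v}, ⟨v, rfl⟩, by rw [indepNumOn_singleton, Set.ncard_singleton]; norm_num⟩ ?_
  rintro x ⟨S, hS, rfl⟩
  have h1 : (1 : ℝ) ≤ (indepNumOn G S : ℝ) := by exact_mod_cast one_le_indepNumOn G hS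
  calc (S.ncard : ℝ) / (indepNumOn G S : ℝ) ≤ (S.ncard : ℝ) :=
        div_le_self (by positivity) h1
    _ ≤ (Fintype.card V : ℝ) := by
        have : S.ncard ≤ Fintype.card V := by
          calc S.ncard ≤ (Set.univ : Set V).ncard :=
                Set.ncard_le_ncard (Set.subset_univ S) Set.finite_univ
            _ = Fintype.card V := by rw [Set.ncard_univ, Nat.card_eq_fintype_card]
        exact_mod_cast this

lemma ratio_le_hallRatio (G : SimpleGraph V) {S : Set V} (hS : S.Nonempty) :
    (S.ncard : ℝ) / (indepNumOn G S : ℝ) ≤ hallRatio G :=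
  le_csSup (hallRatio_bddAbove G) ⟨S, hS, rfl⟩

/-- injective coloring of any finite set -/
lemma inj_coloring (G : SimpleGraph V) (S : Set V) :
    ∃ f : V → ℕ, (∀ v ∈ S, f v < S.ncard) ∧
      ∀ u ∈ S, ∀ v ∈ S, G.Adj u v → f u ≠ f v := by
  classical
  have hc : Fintype.card ↥S = S.ncard := by
    rw [Set.ncard_eq_toFinset_card', Set.toFinset_card]
  let e : ↥S ≃ Fin S.ncard := (Fintype.equivFin ↥S).trans (finCongr hc)
  refine ⟨fun v => if h : v ∈ S then (e ⟨v, h⟩ : ℕ) else 0, ?_, ?_⟩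
  · intro v hv
    simp only [dif_pos hv]
    exact (e ⟨v, hv⟩).isLt
  · intro u hu v hv hadj
    simp only [dif_pos hu, dif_pos hv]
    intro h
    have : (⟨u, hu⟩ : ↥S) = ⟨v, hv⟩ := e.injective (Fin.ext h)
    exact hadj.ne (by simpa using this)

lemma main_claim (G : SimpleGraph V) [Nonempty V] :
    ∀ m : ℕ, ∀ S : Set V, S.ncard = m → ∀ k : ℕ,
      ((m : ℝ) ≤ (k : ℝ) ∨
        (hallRatio G < (m : ℝ) ∧
          hallRatio G + hallRatio G * Real.log ((m : ℝ) / hallRatio G) ≤ (k : ℝ))) →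
      ∃ f : V → ℕ, (∀ v ∈ S, f v < k) ∧ ∀ u ∈ S, ∀ v ∈ S, G.Adj u v → f u ≠ f v := by
  classical
  intro m
  induction m using Nat.strong_induction_on with
  | _ m ih =>
    intro S hSm k hk
    set ρ := hallRatio G with hρdef
    have hρ1 : 1 ≤ ρ := one_le_hallRatio G
    have hρ0 : 0 < ρ := lt_of_lt_of_le one_pos hρ1
    rcases hk with hk | ⟨hm, hk⟩
    · -- base: color injectively
      obtain ⟨f, hf, hprop⟩ := inj_coloring G S
      have hmk : m ≤ k := by exact_mod_cast hk
      exact ⟨f, fun v hv => lt_of_lt_of_le (hSm ▸ hf v hv) hmk, hprop⟩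
    · -- step
      have hm1 : (1 : ℝ) < (m : ℝ) := lt_of_le_of_lt hρ1 hm
      have hm0 : 0 < m := by exact_mod_cast lt_trans one_pos hm1
      have hS : S.Nonempty := Set.nonempty_of_ncard_ne_zero (by omega)
      have hlogpos : 0 < Real.log ((m : ℝ) / ρ) :=
        Real.log_pos ((one_lt_div hρ0).2 hm)
      have hρk : ρ < (k : ℝ) := by nlinarith
      have hk1 : 1 ≤ k := by
        have : (1 : ℝ) ≤ (k : ℝ) := le_of_lt (lt_of_le_of_lt hρ1 hρk)
        exact_mod_cast this
      -- get a large independent set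
      obtain ⟨I, hIS, hInd, hIcard⟩ := indepNumOn_attained G S
      have hα1 : 1 ≤ indepNumOn G S := one_le_indepNumOn G hS
      have hratio : (m : ℝ) / (indepNumOn G S : ℝ) ≤ ρ := by
        rw [← hSm]; exact ratio_le_hallRatio G hS
      set a := I.ncard with ha
      have haα : a = indepNumOn G S := hIcard
      have ha1 : 1 ≤ a := haα ▸ hα1
      have ham : a ≤ m := by
        rw [← hSm]; exact Set.ncard_le_ncard hIS (Set.toFinite S)
      have hmρa : (m : ℝ) ≤ ρ * (a : ℝ) := by
        have hapos : (0 : ℝ) < (a : ℝ) := by exact_mod_cast ha1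
        rw [haα] at hapos ⊢
        calc (m : ℝ) = (m : ℝ) / (indepNumOn G S : ℝ) * (indepNumOn G S : ℝ) := by
              field_simp
          _ ≤ ρ * (indepNumOn G S : ℝ) := by
              exact mul_le_mul_of_nonneg_right hratio (le_of_lt hapos)
      set S' := S \ I with hS'
      set m' := m - a with hm'
      have hS'card : S'.ncard = m' := by
        rw [hS', Set.ncard_diff hIS (Set.toFinite I), hSm]
      have hm'lt : m' < m := by omega
      have hm'cast : (m' : ℝ) = (m : ℝ) - (a : ℝ) := by
        rw [hm', Nat.cast_sub ham]
      -- recursive coloring of S' with k-1 colors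
      have hrec : ∃ f : V → ℕ, (∀ v ∈ S', f v < k - 1) ∧
          ∀ u ∈ S', ∀ v ∈ S', G.Adj u v → f u ≠ f v := by
        apply ih m' hm'lt S' hS'card (k - 1)
        have hk1cast : ((k - 1 : ℕ) : ℝ) = (k : ℝ) - 1 := by
          push_cast [Nat.cast_sub hk1]; ring
        by_cases hc : (m' : ℝ) ≤ ρ
        · left
          rw [hk1cast]
          have hm'k : m' < k := by
            have : (m' : ℝ) < (k : ℝ) := lt_of_le_of_lt hc hρk
            exact_mod_cast this
          have : (m' : ℝ) ≤ (k : ℝ) - 1 := by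
            have : m' + 1 ≤ k := hm'k
            have := (Nat.cast_le (α := ℝ)).2 this
            push_cast at this
            linarith
          exact this
        · right
          push_neg at hc
          refine ⟨hc, ?_⟩
          rw [hk1cast]
          have hm'pos : (0 : ℝ) < (m' : ℝ) := lt_trans hρ0 hc
          have hage : (m : ℝ) / ρ ≤ (a : ℝ) := (div_le_iff₀ hρ0).2 (by linarith [hmρa])
          have hm'le : (m' : ℝ) ≤ (m : ℝ) - (m : ℝ) / ρ := by
            rw [hm'cast]; linarith
          set t : ℝ := 1 - 1 / ρ with ht
          have hmt : (m : ℝ) - (m : ℝ) / ρ = (m : ℝ) * t := by rw [ht]; ring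
          have htpos : 0 < t := by
            by_contra h
            push_neg at h
            have : (m : ℝ) * t ≤ 0 := mul_nonpos_of_nonneg_of_nonpos (by positivity) h
            rw [← hmt] at this
            linarith [lt_of_lt_of_le hm'pos hm'le]
          have hlogm' : Real.log (m' : ℝ) ≤ Real.log (m : ℝ) + Real.log t := by
            calc Real.log (m' : ℝ) ≤ Real.log ((m : ℝ) * t) := by
                  apply Real.log_le_log (by positivity)
                  rw [← hmt]; exact hm'le
              _ = Real.log (m : ℝ) + Real.log t := Real.log_mul (by positivity) (ne_of_gt htpos)
          have hlogt : Real.log t ≤ -(1 / ρ) := by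
            have := Real.log_le_sub_one_of_pos htpos
            rw [ht] at this ⊢
            linarith
          have hlogdiv' : Real.log ((m' : ℝ) / ρ) = Real.log (m' : ℝ) - Real.log ρ :=
            Real.log_div (ne_of_gt hm'pos) (ne_of_gt hρ0)
          have hlogdiv : Real.log ((m : ℝ) / ρ) = Real.log (m : ℝ) - Real.log ρ :=
            Real.log_div (by positivity) (ne_of_gt hρ0)
          have hkey : ρ * Real.log ((m' : ℝ) / ρ) ≤ ρ * Real.log ((m : ℝ) / ρ) - 1 := by
            rw [hlogdiv', hlogdiv]
            have h2 : Real.log (m' : ℝ) ≤ Real.log (m : ℝ) - 1 / ρ := by linarith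
            have h3 : ρ * (1 / ρ) = 1 := by field_simp
            nlinarith [h2, hρ0]
          linarith
      obtain ⟨f', hf', hprop'⟩ := hrec
      refine ⟨fun v => if v ∈ I then k - 1 else f' v, ?_, ?_⟩
      · intro v hv
        by_cases hvI : v ∈ I
        · simp only [if_pos hvI]; omega
        · simp only [if_neg hvI]
          exact lt_of_lt_of_le (hf' v ⟨hv, hvI⟩) (Nat.sub_le k 1)
      · intro u hu v hv hadj
        by_cases huI : u ∈ I <;> by_cases hvI : v ∈ I
        · exact absurd hadj (hInd u huI v hvI)
        · simp only [if_pos huI, if_neg hvI]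
          exact fun h => absurd h.symm (Nat.ne_of_lt (hf' v ⟨hv, hvI⟩))
        · simp only [if_neg huI, if_pos hvI]
          exact Nat.ne_of_lt (hf' u ⟨hu, huI⟩)
        · simp only [if_neg huI, if_neg hvI]
          exact hprop' u ⟨hu, huI⟩ v ⟨hv, hvI⟩ hadj

end Aux

/-- if `G` is a non-empty graph, then
`χ(G) ≤ (2 + log(|V(G)|/ρ(G))) · ρ(G)`. -/
theorem stmt_0 {V : Type*} [Fintype V] [Nonempty V] (G : SimpleGraph V) :
    ∃ n : ℕ, G.Colorable n ∧
      (n : ℝ) ≤ (2 + Real.log ((Fintype.card V : ℝ) / hallRatio G)) * hallRatio G := by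
  classical
  set ρ := hallRatio G with hρdef
  have hρ1 : 1 ≤ ρ := one_le_hallRatio G
  have hρ0 : 0 < ρ := lt_of_lt_of_le one_pos hρ1
  set n := Fintype.card V with hn
  have hn1 : 0 < n := Fintype.card_pos
  have hρn : ρ ≤ (n : ℝ) := hallRatio_le_card G
  have huniv : (Set.univ : Set V).ncard = n := by
    rw [Set.ncard_univ, Nat.card_eq_fintype_card]
  by_cases hcase : ρ < (n : ℝ)
  · set k := ⌈ρ + ρ * Real.log ((n : ℝ) / ρ)⌉₊ with hkdef
    obtain ⟨f, hf, hprop⟩ := main_claim G n Set.univ huniv k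
      (Or.inr ⟨hcase, Nat.le_ceil _⟩)
    have hlognn : 0 ≤ Real.log ((n : ℝ) / ρ) :=
      Real.log_nonneg ((one_le_div hρ0).2 (le_of_lt hcase))
    refine ⟨k, ⟨Coloring.mk (fun v => ⟨f v, hf v (Set.mem_univ v)⟩) ?_⟩, ?_⟩
    · intro u v hadj h
      exact hprop u (Set.mem_univ u) v (Set.mem_univ v) hadj (by simpa [Fin.ext_iff] using h)
    · have hceil : (k : ℝ) < ρ + ρ * Real.log ((n : ℝ) / ρ) + 1 :=
        Nat.ceil_lt_add_one (by positivity)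
      have : ρ + ρ * Real.log ((n : ℝ) / ρ) + 1 ≤ (2 + Real.log ((n : ℝ) / ρ)) * ρ := by
        nlinarith
      linarith
  · push_neg at hcase
    have hρeq : ρ = (n : ℝ) := le_antisymm hρn hcase
    obtain ⟨f, hf, hprop⟩ := main_claim G n Set.univ huniv n (Or.inl le_rfl)
    refine ⟨n, ⟨Coloring.mk (fun v => ⟨f v, hf v (Set.mem_univ v)⟩) ?_⟩, ?_⟩
    · intro u v hadj h
      exact hprop u (Set.mem_univ u) v (Set.mem_univ v) hadj (by simpa [Fin.ext_iff] using h)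
    · rw [hρeq]
      have : (n : ℝ) / (n : ℝ) = 1 := div_self (by positivity)
      rw [this, Real.log_one]
      have : (1 : ℝ) ≤ (n : ℝ) := by exact_mod_cast hn1
      nlinarith
end

section
/- If G is a connected finite simple graph and S is a non-empty subset of V(G), then there exists an induced connected subgraph H of G and a subset S' ⊆ V(H) such that S ⊆ S', |S'| ≤ 3|S|, and the chromatic number of H ∖ S' is at most 2. -/
open SimpleGraph

section helpers

variable {V : Type*} [Fintype V] [DecidableEq V] {G : SimpleGraph V}

private def induceHomMono (G : SimpleGraph V) {A B : Set V} (h : A ⊆ B) :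
    G.induce A →g G.induce B :=
  ⟨fun x => ⟨x.1, h x.2⟩, fun {a b} hab => hab⟩

private lemma colorable_induce_mono {A B : Set V} (h : A ⊆ B) {n : ℕ}
    (hc : (G.induce B).Colorable n) : (G.induce A).Colorable n := by
  obtain ⟨C⟩ := hc
  exact ⟨SimpleGraph.Coloring.mk (fun a => C ⟨a.1, h a.2⟩)
    (fun {a b} hab => C.valid hab)⟩

private lemma reachable_induce_of_walk {A : Set V} {a b : V}
    (w : G.Walk a b) (hs : ∀ x ∈ w.support, x ∈ A) (ha : a ∈ A) (hb : b ∈ A) :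
    (G.induce A).Reachable ⟨a, ha⟩ ⟨b, hb⟩ := by
  induction w with
  | nil => rfl
  | @cons u v c h p ih =>
      have hv : v ∈ A := hs v (by simp [SimpleGraph.Walk.support_cons])
      have h1 : (G.induce A).Adj ⟨u, ha⟩ ⟨v, hv⟩ := h
      exact (h1.reachable).trans (ih (fun x hx => hs x (by simp [SimpleGraph.Walk.support_cons, hx])) hv hb)

private lemma reachable_induce_mono {A B : Set V} (h : A ⊆ B) {a b : ↑A}
    (hr : (G.induce A).Reachable a b) :
    (G.induce B).Reachable ⟨a.1, h a.2⟩ ⟨b.1, h b.2⟩ :=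
  hr.map (induceHomMono G h)

/-- Key step: attach one extra vertex `s` to the current structure. -/
private lemma step (G : SimpleGraph V) (hG : G.Connected)
    (W₀ S₀' : Finset V) (hW₀ : W₀.Nonempty) (hsub : S₀' ⊆ W₀)
    (hconn : (G.induce (W₀ : Set V)).Connected)
    (hcol : (G.induce ((W₀ \ S₀' : Finset V) : Set V)).Colorable 2) (s : V) :
    ∃ W S' : Finset V, W₀ ⊆ W ∧ S' ⊆ W ∧ s ∈ S' ∧ S₀' ⊆ S' ∧ S'.card ≤ S₀'.card + 3 ∧
      (G.induce (W : Set V)).Connected ∧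
      (G.induce ((W \ S' : Finset V) : Set V)).Colorable 2 := by
  by_cases hsW : s ∈ W₀
  · refine ⟨W₀, insert s S₀', subset_rfl, Finset.insert_subset hsW hsub,
      Finset.mem_insert_self _ _, Finset.subset_insert _ _, ?_, hconn, ?_⟩
    · exact (Finset.card_insert_le _ _).trans (by omega)
    · refine colorable_induce_mono ?_ hcol
      intro x hx
      simp only [Finset.coe_sdiff, Set.mem_diff, Finset.mem_coe] at hx ⊢
      exact ⟨hx.1, fun h => hx.2 (Finset.mem_insert_of_mem h)⟩
  · -- choose q ∈ W₀ minimizing distance to s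
    obtain ⟨q, hqW, hqmin⟩ := W₀.exists_min_image (fun v => G.dist s v) hW₀
    set m := G.dist s q with hm
    have hsq : s ≠ q := fun h => hsW (h ▸ hqW)
    have hm0 : m ≠ 0 := by
      intro h
      exact hsq ((hG.dist_eq_zero_iff).mp h)
    obtain ⟨w, hwlen⟩ := SimpleGraph.exists_walk_of_dist_ne_zero hm0
    -- for any decomposition w = p.append r at u, lengths are distances
    have key : ∀ (u : V) (p : G.Walk s u) (r : G.Walk u q), w = p.append r →
        G.dist s u = p.length ∧ G.dist u q = r.length := by
      intro u p r hpr
      have h1 : G.dist s u ≤ p.length := SimpleGraph.dist_le p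
      have h2 : G.dist u q ≤ r.length := SimpleGraph.dist_le r
      have h3 : p.length + r.length = m := by
        have h := hwlen
        rw [hpr, SimpleGraph.Walk.length_append] at h
        exact h
      have h4 : m ≤ G.dist s u + G.dist u q := hG.dist_triangle
      omega
    have hdist : ∀ u ∈ w.support, G.dist s u + G.dist u q = m := by
      intro u hu
      obtain ⟨p, r, hpr⟩ := SimpleGraph.Walk.mem_support_iff_exists_append.mp hu
      obtain ⟨h1, h2⟩ := key u p r hpr
      have h3 : p.length + r.length = m := by
        have h := hwlen
        rw [hpr, SimpleGraph.Walk.length_append] at h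
        exact h
      omega
    -- distances are injective on the support
    have inj : ∀ u ∈ w.support, ∀ v ∈ w.support, G.dist s u = G.dist s v → u = v := by
      intro u hu v hv huv
      obtain ⟨p, r, hpr⟩ := SimpleGraph.Walk.mem_support_iff_exists_append.mp hu
      obtain ⟨hp, hr⟩ := key u p r hpr
      rw [hpr, SimpleGraph.Walk.mem_support_append_iff] at hv
      rcases hv with hv | hv
      · obtain ⟨a, b, hab⟩ := SimpleGraph.Walk.mem_support_iff_exists_append.mp hv
        have hw2 : w = a.append (b.append r) := by
          rw [hpr, hab, SimpleGraph.Walk.append_assoc]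
        obtain ⟨ha, _⟩ := key v a (b.append r) hw2
        have hlen : a.length + b.length = p.length := by
          rw [hab, SimpleGraph.Walk.length_append]
        have hb0 : b.length = 0 := by omega
        exact (SimpleGraph.Walk.eq_of_length_eq_zero hb0).symm
      · obtain ⟨a, b, hab⟩ := SimpleGraph.Walk.mem_support_iff_exists_append.mp hv
        have hw2 : w = (p.append a).append b := by
          rw [hpr, hab, SimpleGraph.Walk.append_assoc]
        obtain ⟨ha, _⟩ := key v (p.append a) b hw2
        have hlen : (p.append a).length = p.length + a.length :=
          SimpleGraph.Walk.length_append _ _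
        have ha0 : a.length = 0 := by omega
        exact SimpleGraph.Walk.eq_of_length_eq_zero ha0
    -- support vertices strictly closer than m are not in W₀
    have hnotW : ∀ u ∈ w.support, G.dist s u < m → u ∉ W₀ := by
      intro u hu hlt huW
      exact absurd (hqmin u huW) (by omega)
    -- support vertices at distance ≤ m-2 have no neighbors in W₀
    have hnoadj : ∀ u ∈ w.support, G.dist s u + 2 ≤ m → ∀ v ∈ W₀, ¬ G.Adj u v := by
      intro u hu hle v hvW hadj
      have h1 : G.dist s v ≤ G.dist s u + G.dist u v := hG.dist_triangle
      have h2 : G.dist u v = 1 := SimpleGraph.dist_eq_one_iff_adj.mpr hadj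
      have h3 : m ≤ G.dist s v := hqmin v hvW
      omega
    set Sy : Finset V := w.support.toFinset.filter (fun u => G.dist s u + 1 = m) with hSy
    have hSycard : Sy.card ≤ 1 := by
      refine Finset.card_le_one.mpr ?_
      intro a ha b hb
      simp only [hSy, Finset.mem_filter, List.mem_toFinset] at ha hb
      exact inj a ha.1 b hb.1 (by omega)
    refine ⟨W₀ ∪ w.support.toFinset, insert s (insert q S₀') ∪ Sy, ?_, ?_, ?_, ?_, ?_, ?_, ?_⟩
    · exact Finset.subset_union_left
    · -- S' ⊆ W
      refine Finset.union_subset ?_ ?_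
      · refine Finset.insert_subset ?_ (Finset.insert_subset ?_ ?_)
        · exact Finset.mem_union_right _ (by simp [w.start_mem_support])
        · exact Finset.mem_union_left _ hqW
        · exact hsub.trans (Finset.subset_union_left)
      · exact (Finset.filter_subset _ _).trans Finset.subset_union_right
    · exact Finset.mem_union_left _ (Finset.mem_insert_self _ _)
    · exact fun x hx => Finset.mem_union_left _
        (Finset.mem_insert_of_mem (Finset.mem_insert_of_mem hx))
    · calc (insert s (insert q S₀') ∪ Sy).card
          ≤ (insert s (insert q S₀')).card + Sy.card := Finset.card_union_le _ _
        _ ≤ S₀'.card + 3 := by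
            have h1 := Finset.card_insert_le s (insert q S₀')
            have h2 := Finset.card_insert_le q S₀'
            omega
    · -- connectivity
      rw [SimpleGraph.connected_iff]
      constructor
      · intro a b
        have hq' : (q : V) ∈ ((W₀ ∪ w.support.toFinset : Finset V) : Set V) := by
          simp [hqW]
        have reach : ∀ c : ((W₀ ∪ w.support.toFinset : Finset V) : Set V),
            (G.induce ((W₀ ∪ w.support.toFinset : Finset V) : Set V)).Reachable c ⟨q, hq'⟩ := by
          rintro ⟨c, hc⟩
          have hc' : c ∈ W₀ ∪ w.support.toFinset := by exact_mod_cast hc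
          rcases Finset.mem_union.mp hc' with hcW | hcs
          · have := hconn.preconnected ⟨c, hcW⟩ ⟨q, hqW⟩
            have := reachable_induce_mono (A := (W₀ : Set V))
              (B := ((W₀ ∪ w.support.toFinset : Finset V) : Set V))
              (by intro x hx; simp only [Finset.coe_union, Set.mem_union]; exact Or.inl hx) this
            exact this
          · rw [List.mem_toFinset] at hcs
            obtain ⟨p, r, hpr⟩ := SimpleGraph.Walk.mem_support_iff_exists_append.mp hcs
            refine reachable_induce_of_walk r ?_ _ _
            intro x hx
            have : x ∈ w.support := by
              rw [hpr, SimpleGraph.Walk.mem_support_append_iff]; exact Or.inr hx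
            simp only [Finset.coe_union, Set.mem_union, Finset.mem_coe, List.mem_toFinset]
            exact Or.inr this
        exact (reach a).trans (reach b).symm
      · exact ⟨⟨q, by simp [hqW]⟩⟩
    · -- colorability
      obtain ⟨C₀⟩ := hcol
      set A : Set V := ((((W₀ ∪ w.support.toFinset) \ (insert s (insert q S₀') ∪ Sy)) : Finset V) : Set V) with hA
      -- membership facts for A
      have hmemA : ∀ x ∈ A, (x ∈ W₀ ∧ x ∉ S₀') ∨
          (x ∉ W₀ ∧ x ∈ w.support ∧ 1 ≤ G.dist s x ∧ G.dist s x + 2 ≤ m) := by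
        intro x hx
        simp only [A, Finset.coe_sdiff, Set.mem_diff, Finset.mem_coe, Finset.mem_union,
          Finset.mem_insert, List.mem_toFinset, not_or] at hx
        obtain ⟨hx1, hx2⟩ := hx
        have hxs : x ≠ s := hx2.1.1
        have hxq : x ≠ q := hx2.1.2.1
        have hxS : x ∉ S₀' := hx2.1.2.2
        have hxSy : x ∉ Sy := hx2.2
        rcases hx1 with hxW | hxsupp
        · exact Or.inl ⟨hxW, hxS⟩
        · refine Or.inr ⟨?_, hxsupp, ?_, ?_⟩
          · intro hxW
            have h1 : m ≤ G.dist s x := hqmin x hxW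
            have h2 := hdist x hxsupp
            have : G.dist s x = m := by omega
            exact hxq (inj x hxsupp q w.end_mem_support (by
              have := hdist q w.end_mem_support
              have hq0 : G.dist q q = 0 := by
                simp
              omega))
          · -- dist ≥ 1
            by_contra h
            push_neg at h
            have : G.dist s x = 0 := by omega
            have hs0 : G.dist s s = 0 := by simp
            exact hxs (inj x hxsupp s w.start_mem_support (by omega))
          · -- dist + 2 ≤ m
            have h2 := hdist x hxsupp
            have hne1 : G.dist s x + 1 ≠ m := by
              intro h
              exact hxSy (by simp [hSy, hxsupp, h])
            have hnem : G.dist s x ≠ m := by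
              intro h
              refine hxq (inj x hxsupp q w.end_mem_support ?_)
              have := hdist q w.end_mem_support
              have hq0 : G.dist q q = 0 := by simp
              omega
            omega
      refine ⟨SimpleGraph.Coloring.mk
        (fun x => if hx : (x : V) ∈ W₀ then
          C₀ ⟨x, by
            rcases hmemA x.1 x.2 with ⟨h1, h2⟩ | ⟨h1, _⟩
            · simp [Finset.mem_coe, h1, h2]
            · exact absurd hx h1⟩
          else ⟨G.dist s x % 2, by omega⟩) ?_⟩
      rintro ⟨x, hxA⟩ ⟨y, hyA⟩ hadj
      have hadj' : G.Adj x y := hadj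
      rcases hmemA x hxA with ⟨hx1, hx2⟩ | ⟨hx1, hx2, hx3, hx4⟩ <;>
        rcases hmemA y hyA with ⟨hy1, hy2⟩ | ⟨hy1, hy2, hy3, hy4⟩
      · -- both in W₀ : use C₀
        simp only [dif_pos hx1, dif_pos hy1]
        have : (G.induce ((W₀ \ S₀' : Finset V) : Set V)).Adj
            ⟨x, by simp [hx1, hx2]⟩ ⟨y, by simp [hy1, hy2]⟩ := hadj'
        exact C₀.valid this
      · exact absurd hadj'.symm (hnoadj y hy2 hy4 x hx1)
      · exact absurd hadj' (hnoadj x hx2 hx4 y hy1)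
      · -- both on the path interior: parity coloring
        simp only [dif_neg hx1, dif_neg hy1]
        have hne : G.dist s x ≠ G.dist s y := by
          intro h
          exact (G.irrefl) ((inj x hx2 y hy2 h) ▸ hadj')
        have hd1 : G.dist s y ≤ G.dist s x + 1 := by
          have := hG.dist_triangle (u := s) (v := x) (w := y)
          have : G.dist x y = 1 := SimpleGraph.dist_eq_one_iff_adj.mpr hadj'
          have h1 : G.dist s y ≤ G.dist s x + G.dist x y := hG.dist_triangle
          omega
        have hd2 : G.dist s x ≤ G.dist s y + 1 := by
          have : G.dist y x = 1 := SimpleGraph.dist_eq_one_iff_adj.mpr hadj'.symm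
          have h1 : G.dist s x ≤ G.dist s y + G.dist y x := hG.dist_triangle
          omega
        intro hcontra
        have : G.dist s x % 2 = G.dist s y % 2 := by
          simpa [Fin.ext_iff] using hcontra
        omega

end helpers

/-- in a connected graph `G`, for any non-empty `S ⊆ V(G)` there is an
induced connected subgraph `H = G[W]` and `S' ⊆ W` with `S ⊆ S'`, `|S'| ≤ 3|S|`,
and `χ(H ∖ S') ≤ 2`. -/
theorem stmt_2 {V : Type*} [Fintype V] [DecidableEq V] (G : SimpleGraph V)
    (hG : G.Connected) (S : Finset V) (hS : S.Nonempty) :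
    ∃ (W S' : Finset V), S' ⊆ W ∧ S ⊆ S' ∧ S'.card ≤ 3 * S.card ∧
      (G.induce (W : Set V)).Connected ∧
      (G.induce ((W \ S' : Finset V) : Set V)).Colorable 2 := by
  have main : ∀ (S : Finset V) (hS : S.Nonempty),
      ∃ (W S' : Finset V), S' ⊆ W ∧ S ⊆ S' ∧ S'.card + 2 ≤ 3 * S.card ∧
        (G.induce (W : Set V)).Connected ∧
        (G.induce ((W \ S' : Finset V) : Set V)).Colorable 2 := by
    intro S hS
    induction hS using Finset.Nonempty.cons_induction with
    | singleton a =>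
        refine ⟨{a}, {a}, subset_rfl, subset_rfl, by simp, ?_, ?_⟩
        · rw [SimpleGraph.connected_iff]
          refine ⟨?_, ⟨⟨a, by simp⟩⟩⟩
          rintro ⟨x, hx⟩ ⟨y, hy⟩
          simp only [Finset.coe_singleton, Set.mem_singleton_iff] at hx hy
          subst hx; subst hy
          rfl
        · refine ⟨SimpleGraph.Coloring.mk (fun x => ?_) ?_⟩
          · exact absurd x.2 (by simp)
          · rintro ⟨x, hx⟩
            exact absurd hx (by simp)
    | cons a s ha hs ih =>
        obtain ⟨W₀, S₀', hsub, hSsub, hcard, hconn, hcol⟩ := ih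
        have hW₀ne : W₀.Nonempty := by
          obtain ⟨x, hx⟩ := hs
          exact ⟨x, hsub (hSsub hx)⟩
        obtain ⟨W, S', hWsub, hS'W, haS', hS₀S', hcard', hconn', hcol'⟩ :=
          step G hG W₀ S₀' hW₀ne hsub hconn hcol a
        refine ⟨W, S', hS'W, ?_, ?_, hconn', hcol'⟩
        · intro x hx
          rcases Finset.mem_cons.mp hx with rfl | hx
          · exact haS'
          · exact hS₀S' (hSsub hx)
        · rw [Finset.card_cons]
          omega
  obtain ⟨W, S', h1, h2, h3, h4, h5⟩ := main S hS
  exact ⟨W, S', h1, h2, by omega, h4, h5⟩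
end

section
/- Let G be a finite simple graph and let A₁, A₂, B be pairwise disjoint non-empty subsets of V(G). Suppose for each i ∈ {1,2} there exists a set 𝒫ᵢ of Aᵢ–B paths in G ∖ A_{3−i} with |𝒫ᵢ| = 2|Aᵢ|, such that the paths in 𝒫ᵢ are pairwise vertex-disjoint outside of Aᵢ and every vertex of Aᵢ lies on exactly two paths of 𝒫ᵢ. Then there exist |A₁| + |A₂| pairwise vertex-disjoint (A₁ ∪ A₂)–B paths in G. -/
/-!
Every set `S` separating `A₁ ∪ A₂` from `B` has at least `|A₁| + |A₂|` vertices. Indeed each of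
the `2|A₁|` paths of `𝒫₁` meets `S`, and a vertex of `S` lies on at most two of them if it is in
`A₁`, on none if it is in `A₂` and on at most one otherwise; adding this count to the symmetric
one for `𝒫₂` gives `2|A₁| + 2|A₂| ≤ 2|S|`. Menger's theorem then provides the paths.

Menger's theorem is proved by induction on the number of edges, following Diestel's first proof,
with walks handled as their vertex lists. If the contraction `G/xy` of an edge has `k` disjoint
`A`–`B` walks, they lift to `G`. Otherwise a separator of `G/xy` with fewer than `k` vertices pulls
back to a separator `S ∋ x, y` of `G` with exactly `k` vertices. Every `A`–`S` or `S`–`B` separator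
of `G - xy` separates `A` from `B` in `G`, so by induction `G - xy` has `k` disjoint `A`–`S` and
`k` disjoint `S`–`B` walks, and these glue along `S`.
-/

open SimpleGraph

/-- `p` is an `A`–`B` path: a path from `u ∈ A` to `v ∈ B` whose only vertex in `A`
is `u` and whose only vertex in `B` is `v`. -/
def IsABPath {V : Type*} (G : SimpleGraph V) (A B : Set V) {u v : V}
    (p : G.Walk u v) : Prop :=
  p.IsPath ∧ u ∈ A ∧ v ∈ B ∧ (∀ w ∈ p.support, w ∈ A → w = u) ∧
    (∀ w ∈ p.support, w ∈ B → w = v)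

namespace Menger

variable {V : Type*} {G G' : SimpleGraph V} {A A' B B' S : Set V} {l : List V} {k : ℕ}

def IsABWalk (G : SimpleGraph V) (A B : Set V) (l : List V) : Prop :=
  l.IsChain G.Adj ∧ (∃ a ∈ l.head?, a ∈ A) ∧ ∃ b ∈ l.getLast?, b ∈ B

def Separates (G : SimpleGraph V) (A B S : Set V) : Prop :=
  ∀ l, IsABWalk G A B l → ∃ s ∈ l, s ∈ S

def HasDisjointWalks (G : SimpleGraph V) (A B : Set V) (k : ℕ) : Prop :=
  ∃ P : Fin k → List V, (∀ i, IsABWalk G A B (P i)) ∧ Pairwise fun i j => (P i).Disjoint (P j)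

namespace IsABWalk

theorem ne_nil (h : IsABWalk G A B l) : l ≠ [] := by
  rintro rfl
  simp [IsABWalk] at h

theorem singleton {v : V} (hA : v ∈ A) (hB : v ∈ B) : IsABWalk G A B [v] :=
  ⟨.singleton v, ⟨v, rfl, hA⟩, ⟨v, rfl, hB⟩⟩

theorem mono (h : IsABWalk G A B l) (hG : G ≤ G') (hA : A ⊆ A') (hB : B ⊆ B') :
    IsABWalk G' A' B' l :=
  ⟨h.1.imp fun _ _ hab => hG hab, h.2.1.imp fun _ ha => ⟨ha.1, hA ha.2⟩,
    h.2.2.imp fun _ hb => ⟨hb.1, hB hb.2⟩⟩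

theorem reverse (h : IsABWalk G A B l) : IsABWalk G B A l.reverse :=
  ⟨List.isChain_reverse.2 (h.1.imp fun _ _ hab => hab.symm),
    by simpa only [List.head?_reverse] using h.2.2,
    by simpa only [List.getLast?_reverse] using h.2.1⟩

theorem splice {C D : Set V} {p₁ p₂ q₁ q₂ : List V} {w : V}
    (hp : IsABWalk G A C (p₁ ++ w :: p₂)) (hq : IsABWalk G D B (q₁ ++ w :: q₂)) :
    IsABWalk G A B (p₁ ++ w :: q₂) := by
  refine ⟨List.isChain_split.2 ⟨(List.isChain_split.1 hp.1).1, (List.isChain_split.1 hq.1).2⟩,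
    ?_, ?_⟩
  · simpa [List.head?_append] using hp.2.1
  · simpa [List.getLast?_append] using hq.2.2

theorem suffix_of_mem {C : Set V} {l₁ l₂ : List V} {w : V} (h : IsABWalk G A B (l₁ ++ w :: l₂))
    (hw : w ∈ C) : IsABWalk G C B (w :: l₂) :=
  splice (p₁ := []) (p₂ := []) (singleton (B := Set.univ) hw trivial) h

theorem prefix_of_mem {C : Set V} {l₁ l₂ : List V} {w : V} (h : IsABWalk G A B (l₁ ++ w :: l₂))
    (hw : w ∈ C) : IsABWalk G A C (l₁ ++ [w]) :=
  splice (q₁ := []) (q₂ := []) h (singleton (A := Set.univ) trivial hw)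

/-- Take a shortest `A`–`B` walk with vertices in `l`: a later vertex in `A` or an earlier vertex
in `B` would cut it shorter. -/
theorem exists_trim (h : IsABWalk G A B l) :
    ∃ m ⊆ l, IsABWalk G A B m ∧ (∀ v ∈ m.tail, v ∉ A) ∧ ∀ v ∈ m.dropLast, v ∉ B := by
  classical
  have hex : ∃ n, ∃ m ⊆ l, IsABWalk G A B m ∧ m.length = n := ⟨_, l, List.Subset.refl l, h, rfl⟩
  obtain ⟨m, hml, hm, hlen⟩ := Nat.find_spec hex
  have hmin : ∀ m' ⊆ l, IsABWalk G A B m' → m.length ≤ m'.length := fun m' hm'l hm' =>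
    hlen ▸ Nat.find_min' hex ⟨m', hm'l, hm', rfl⟩
  refine ⟨m, hml, hm, fun v hv hvA => ?_, fun v hv hvB => ?_⟩
  · obtain ⟨a, t, rfl⟩ := List.exists_cons_of_ne_nil hm.ne_nil
    obtain ⟨t₁, t₂, rfl⟩ := List.append_of_mem hv
    rw [← List.cons_append] at hm
    have := hmin _ (fun x hx => hml (by simp_all)) (hm.suffix_of_mem hvA)
    simp at this
    omega
  · obtain ⟨b, hb, -⟩ := hm.2.2
    obtain ⟨t, rfl⟩ := List.getLast?_eq_some_iff.1 hb
    rw [List.dropLast_concat] at hv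
    obtain ⟨t₁, t₂, rfl⟩ := List.append_of_mem hv
    simp only [List.append_assoc, List.cons_append] at hm hml hmin
    have := hmin _ (fun x hx => hml (by simp at hx ⊢; tauto)) (hm.prefix_of_mem hvB)
    simp at this

end IsABWalk

namespace Separates

theorem symm (h : Separates G A B S) : Separates G B A S := fun l hl => by
  simpa using h l.reverse hl.reverse

/-- Splicing the two walks at a common vertex outside `S` would give an `A`–`B` walk avoiding
`S`. -/
theorem mem_of_mem_of_mem (h : Separates G A B S) {P Q : List V} {w : V}
    (hP : IsABWalk G A S P) (hPS : ∀ v ∈ P.dropLast, v ∉ S)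
    (hQ : IsABWalk G S B Q) (hQS : ∀ v ∈ Q.tail, v ∉ S) (hwP : w ∈ P) (hwQ : w ∈ Q) :
    w ∈ S := by
  obtain ⟨p₁, p₂, rfl⟩ := List.append_of_mem hwP
  obtain ⟨q₁, q₂, rfl⟩ := List.append_of_mem hwQ
  obtain ⟨s, hs, hsS⟩ := h _ (hP.splice hQ)
  rcases List.mem_append.1 hs with hs | hs
  · exact absurd hsS (hPS s (by rw [List.dropLast_append_cons]; exact List.mem_append_left _ hs))
  rcases List.mem_cons.1 hs with rfl | hs
  · exact hsS
  · exact absurd hsS (hQS s (by cases q₁ <;> simp [hs]))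

theorem eq_of_mem_of_mem (h : Separates G A B S) {p q : List V} {c d w : V}
    (hP : IsABWalk G A S (p ++ [c])) (hp : ∀ v ∈ p, v ∉ S)
    (hQ : IsABWalk G S B (d :: q)) (hq : ∀ v ∈ q, v ∉ S)
    (hwP : w ∈ p ++ [c]) (hwQ : w ∈ d :: q) : w = c ∧ w = d := by
  have hwS := h.mem_of_mem_of_mem hP (by simpa using hp) hQ (by simpa using hq) hwP hwQ
  simp only [List.mem_append, List.mem_cons, List.not_mem_nil, or_false] at hwP hwQ
  exact ⟨hwP.resolve_left (hp w · hwS), hwQ.resolve_right (hq w · hwS)⟩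

theorem of_deleteEdges_right {x y : V} {T : Set V} (h : Separates G A B S)
    (hx : x ∈ S) (hy : y ∈ S) (hT : Separates (G.deleteEdges {s(x, y)}) S B T) :
    Separates G A B T := by
  intro l hl
  obtain ⟨s, hs, hsS⟩ := h l hl
  obtain ⟨l₁, l₂, rfl⟩ := List.append_of_mem hs
  obtain ⟨m, hm, hmw, hmS, -⟩ := (hl.suffix_of_mem hsS).exists_trim
  have hmw' : IsABWalk (G.deleteEdges {s(x, y)}) S B m := by
    refine ⟨hmw.1.imp_of_mem_tail_imp fun a b _ hb hab => ?_, hmw.2⟩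
    refine (deleteEdges_adj ..).2 ⟨hab, fun he => ?_⟩
    rcases Sym2.eq_iff.1 he with ⟨-, rfl⟩ | ⟨-, rfl⟩
    · exact hmS b hb hy
    · exact hmS b hb hx
  obtain ⟨t, ht, htT⟩ := hT m hmw'
  exact ⟨t, List.mem_append_right _ (hm ht), htT⟩

theorem of_deleteEdges_left {x y : V} {T : Set V} (h : Separates G A B S)
    (hx : x ∈ S) (hy : y ∈ S) (hT : Separates (G.deleteEdges {s(x, y)}) A S T) :
    Separates G A B T :=
  (h.symm.of_deleteEdges_right hx hy hT.symm).symm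

end Separates

namespace HasDisjointWalks

theorem mono (h : HasDisjointWalks G A B k) (hG : G ≤ G') : HasDisjointWalks G' A B k :=
  h.imp fun _ hP => ⟨fun i => (hP.1 i).mono hG subset_rfl subset_rfl, hP.2⟩

theorem exists_trim (h : HasDisjointWalks G A B k) :
    ∃ P : Fin k → List V, (∀ i, IsABWalk G A B (P i) ∧ (∀ v ∈ (P i).tail, v ∉ A) ∧
      ∀ v ∈ (P i).dropLast, v ∉ B) ∧ Pairwise fun i j => (P i).Disjoint (P j) := by
  obtain ⟨P, hP, hdisj⟩ := h
  choose Q hQP hQ using fun i => (hP i).exists_trim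
  exact ⟨Q, hQ, fun i j hij _ hi hj => hdisj hij (hQP i hi) (hQP j hj)⟩

theorem glue {S : Finset V} (hS : Separates G A B S) (hk : S.card = k)
    (hAS : HasDisjointWalks G A S k) (hSB : HasDisjointWalks G S B k) :
    HasDisjointWalks G A B k := by
  obtain ⟨P, hP, hPd⟩ := hAS.exists_trim
  obtain ⟨Q, hQ, hQd⟩ := hSB.exists_trim
  choose c hcP hcS using fun i => (hP i).1.2.2
  choose d hdQ hdS using fun j => (hQ j).1.2.1
  choose p hp using fun i => List.getLast?_eq_some_iff.1 (hcP i)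
  choose q hq using fun j => List.head?_eq_some_iff.1 (hdQ j)
  simp only [hp, hq, List.dropLast_concat, List.tail_cons] at hP hQ hPd hQd
  have hc_inj : Function.Injective c := fun i j hij => by_contra fun hne =>
    hPd hne (show c i ∈ p i ++ [c i] by simp) (show c i ∈ p j ++ [c j] by simp [hij])
  have hd_inj : Function.Injective d := fun i j hij => by_contra fun hne =>
    hQd hne (show d i ∈ d i :: q i by simp) (show d i ∈ d j :: q j by simp [hij])
  -- `d` is a bijection onto `S`, so every `A`–`S` walk can be continued by an `S`–`B` walk.
  have hσ : ∀ i, ∃ j, d j = c i := fun i => by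
    obtain ⟨j, -, hj⟩ := Finset.surj_on_of_inj_on_of_card_le (s := Finset.univ)
      (fun j _ => d j) (fun j _ => hdS j) (fun _ _ _ _ h => hd_inj h) (by simp [hk]) _ (hcS i)
    exact ⟨j, hj.symm⟩
  choose σ hσ using hσ
  have hmeet : ∀ i j w, w ∈ p i ++ [c i] → w ∈ d (σ j) :: q (σ j) → i = j := fun i j w hi hj =>
    have h := hS.eq_of_mem_of_mem (hP i).1 (hP i).2.2 (hQ (σ j)).1 (hQ (σ j)).2.1 hi hj
    hc_inj (h.1.symm.trans (h.2.trans (hσ j)))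
  refine ⟨fun i => p i ++ c i :: q (σ i), fun i => ?_, fun i j hij w hwi hwj => ?_⟩
  · have hQσ := (hQ (σ i)).1
    rw [hσ] at hQσ
    exact IsABWalk.splice (p₂ := []) (q₁ := []) (hP i).1 hQσ
  · have hmem : ∀ i, w ∈ p i ++ c i :: q (σ i) →
        w ∈ p i ++ [c i] ∨ w ∈ d (σ i) :: q (σ i) := fun i hw => by
      rw [hσ]
      simp only [List.mem_append, List.mem_cons] at hw ⊢
      tauto
    rcases hmem i hwi with hi | hi <;> rcases hmem j hwj with hj | hj
    · exact hPd hij hi hj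
    · exact hij (hmeet i j w hi hj)
    · exact hij (hmeet j i w hj hi).symm
    · exact hQd (fun h => hij (hc_inj (by rw [← hσ, h, hσ]))) hi hj

end HasDisjointWalks

theorem hasDisjointWalks_of_forall_not_adj [Fintype V] (hG : ∀ u v, ¬G.Adj u v)
    (h : ∀ S : Finset V, Separates G A B S → k ≤ S.card) : HasDisjointWalks G A B k := by
  classical
  have hsep : Separates G A B (A ∩ B).toFinset := by
    rintro (_ | ⟨a, _ | ⟨b, t⟩⟩) ⟨hc, hA, hB⟩
    · simp at hA
    · simp_all
    · exact absurd (List.isChain_cons_cons.1 hc).1 (hG a b)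
  obtain ⟨f⟩ := Function.Embedding.nonempty_of_card_le (α := Fin k) (β := (A ∩ B).toFinset)
    (by simpa only [Fintype.card_fin, Fintype.card_coe] using h _ hsep)
  refine ⟨fun i => [f i], fun i => ?_, fun i j hij v hi hj => ?_⟩
  · have := (f i).2
    simp only [Set.mem_toFinset, Set.mem_inter_iff] at this
    exact .singleton this.1 this.2
  · simp only [List.mem_singleton] at hi hj
    exact hij (f.injective (Subtype.ext (hi ▸ hj)))

section Contraction

variable [DecidableEq V] {x y : V}

def merge (x y : V) (v : V) : V := if v = y then x else v

@[simp] theorem merge_right (x y : V) : merge x y y = x := if_pos rfl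

theorem merge_of_ne {v : V} (h : v ≠ y) : merge x y v = v := if_neg h

/-- Contraction of `xy` onto `x`, on the same vertex type; the vertex `y` becomes isolated. -/
def contract (G : SimpleGraph V) (x y : V) : SimpleGraph V :=
  fromRel (Relation.Map G.Adj (merge x y) (merge x y))

theorem adj_of_merge_eq (hxy : G.Adj x y) {a b : V} (h : merge x y a = merge x y b)
    (hab : a ≠ b) : G.Adj a b := by
  unfold merge at h
  split_ifs at h with ha hb hb <;> subst_vars
  · exact absurd rfl hab
  · exact hxy.symm
  · exact hxy
  · exact absurd rfl hab

theorem ncard_edgeSet_contract_lt [Finite V] (hxy : G.Adj x y) :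
    (contract G x y).edgeSet.ncard < G.edgeSet.ncard := by
  have hsub : (contract G x y).edgeSet ⊆ Sym2.map (merge x y) '' (G.edgeSet \ {s(x, y)}) := by
    intro e he
    induction e using Sym2.ind with | _ a b => ?_
    obtain ⟨hab, ⟨a', b', hadj, rfl, rfl⟩ | ⟨b', a', hadj, rfl, rfl⟩⟩ :=
      (fromRel_adj _ _ _).1 he
    · refine ⟨s(a', b'), ⟨hadj, fun he' => hab ?_⟩, rfl⟩
      rcases Sym2.eq_iff.1 he' with ⟨rfl, rfl⟩ | ⟨rfl, rfl⟩ <;> simp [merge]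
    · refine ⟨s(b', a'), ⟨hadj, fun he' => hab ?_⟩, Sym2.eq_swap⟩
      rcases Sym2.eq_iff.1 he' with ⟨rfl, rfl⟩ | ⟨rfl, rfl⟩ <;> simp [merge]
  calc (contract G x y).edgeSet.ncard
      ≤ (Sym2.map (merge x y) '' (G.edgeSet \ {s(x, y)})).ncard := Set.ncard_le_ncard hsub
    _ ≤ (G.edgeSet \ {s(x, y)}).ncard := Set.ncard_image_le
    _ < G.edgeSet.ncard := Set.ncard_sdiff_singleton_lt_of_mem hxy

/-- Consecutive lifted vertices in the fibre `{x, y}` of `x` are joined by the edge `xy`. -/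
theorem exists_lift (hxy : G.Adj x y) :
    ∀ (m : List V) (a b : V), m.IsChain (contract G x y).Adj →
      m.head? = some (merge x y a) → m.getLast? = some (merge x y b) →
      ∃ l : List V, l.IsChain G.Adj ∧ l.head? = some a ∧ l.getLast? = some b ∧
        ∀ v ∈ l, merge x y v ∈ m
  | [], _, _, _, ha, _ => by simp at ha
  | [u], a, b, _, ha, hb => by
    simp only [List.head?_cons, List.getLast?_singleton, Option.some.injEq] at ha hb
    by_cases hab : a = b
    · subst hab
      exact ⟨[a], .singleton a, rfl, rfl, by simp [ha]⟩
    · exact ⟨[a, b], List.isChain_pair.2 (adj_of_merge_eq hxy (ha.symm.trans hb) hab), rfl, rfl,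
        by simp [← ha, hb]⟩
  | u :: w :: t, a, b, hc, ha, hb => by
    simp only [List.head?_cons, Option.some.injEq] at ha
    obtain ⟨huw, hmap⟩ := (fromRel_adj _ _ _).1 (List.isChain_cons_cons.1 hc).1
    obtain ⟨a', b', hadj, ha', hb'⟩ : ∃ a' b', G.Adj a' b' ∧ merge x y a' = u ∧
        merge x y b' = w := by
      rcases hmap with ⟨a', b', h, h₁, h₂⟩ | ⟨b', a', h, h₁, h₂⟩
      exacts [⟨a', b', h, h₁, h₂⟩, ⟨a', b', h.symm, h₂, h₁⟩]
    obtain ⟨l, hl, hlh, hll, hlm⟩ :=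
      exists_lift hxy (w :: t) b' b (List.isChain_cons_cons.1 hc).2 (by simp [hb']) hb
    have hlm' : ∀ v ∈ l, merge x y v ∈ u :: w :: t := fun v hv => List.mem_cons_of_mem _ (hlm v hv)
    obtain ⟨l', rfl⟩ := List.head?_eq_some_iff.1 hlh
    by_cases haa' : a = a'
    · subst haa'
      refine ⟨a :: b' :: l', List.isChain_cons_cons.2 ⟨hadj, hl⟩, rfl, ?_, ?_⟩
      · simpa using hll
      · simpa [← ha] using hlm'
    · refine ⟨a :: a' :: b' :: l', List.isChain_cons_cons.2
        ⟨adj_of_merge_eq hxy (ha.symm.trans ha'.symm) haa', List.isChain_cons_cons.2 ⟨hadj, hl⟩⟩,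
        rfl, ?_, ?_⟩
      · simpa using hll
      · simpa [← ha, ha'] using hlm'

theorem HasDisjointWalks.of_contract (hxy : G.Adj x y)
    (h : HasDisjointWalks (contract G x y) (merge x y '' A) (merge x y '' B) k) :
    HasDisjointWalks G A B k := by
  obtain ⟨P, hP, hPd⟩ := h
  have hlift : ∀ i, ∃ l, IsABWalk G A B l ∧ ∀ v ∈ l, merge x y v ∈ P i := by
    intro i
    obtain ⟨hc, ⟨_, ha, a, haA, rfl⟩, ⟨_, hb, b, hbB, rfl⟩⟩ := hP i
    obtain ⟨l, hl, hlh, hll, hlP⟩ := exists_lift hxy (P i) a b hc ha hb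
    exact ⟨l, ⟨hl, ⟨a, hlh, haA⟩, ⟨b, hll, hbB⟩⟩, hlP⟩
  choose l hl hlP using hlift
  exact ⟨l, hl, fun i j hij v hi hj => hPd hij (hlP i v hi) (hlP j v hj)⟩

theorem exists_contract_walk :
    ∀ l : List V, l.IsChain G.Adj → ∃ m : List V, m.IsChain (contract G x y).Adj ∧
      m.head? = l.head?.map (merge x y) ∧ m.getLast? = l.getLast?.map (merge x y) ∧
      ∀ v ∈ m, ∃ u ∈ l, merge x y u = v
  | [], _ => ⟨[], .nil, rfl, rfl, by simp⟩
  | [u], _ => ⟨[merge x y u], .singleton _, rfl, rfl, by simp⟩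
  | u :: w :: t, hc => by
    obtain ⟨hadj, hc⟩ := List.isChain_cons_cons.1 hc
    obtain ⟨m, hm, hmh, hml, hmsub⟩ := exists_contract_walk (w :: t) hc
    have hsub : ∀ v ∈ m, ∃ u' ∈ u :: w :: t, merge x y u' = v := fun v hv =>
      (hmsub v hv).imp fun _ h => ⟨List.mem_cons_of_mem _ h.1, h.2⟩
    by_cases huw : merge x y u = merge x y w
    · exact ⟨m, hm, by simp [hmh, huw], by simpa using hml, hsub⟩
    · obtain ⟨m', rfl⟩ := List.head?_eq_some_iff.1 hmh
      refine ⟨merge x y u :: merge x y w :: m', List.isChain_cons_cons.2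
        ⟨(fromRel_adj _ _ _).2 ⟨huw, .inl ⟨u, w, hadj, rfl, rfl⟩⟩, hm⟩, rfl, by simpa using hml, ?_⟩
      rintro v (_ | ⟨_, hv⟩)
      exacts [⟨u, by simp, rfl⟩, hsub v hv]

theorem Separates.of_contract {S : Set V}
    (h : Separates (contract G x y) (merge x y '' A) (merge x y '' B) S) :
    Separates G A B (merge x y ⁻¹' S) := by
  rintro l ⟨hc, ⟨a, ha, haA⟩, ⟨b, hb, hbB⟩⟩
  obtain ⟨m, hm, hmh, hml, hmsub⟩ := exists_contract_walk (x := x) (y := y) l hc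
  obtain ⟨s, hs, hsS⟩ := h m ⟨hm, ⟨_, by simp [hmh, Option.mem_def.1 ha], a, haA, rfl⟩,
    ⟨_, by simp [hml, Option.mem_def.1 hb], b, hbB, rfl⟩⟩
  obtain ⟨u, hu, rfl⟩ := hmsub s hs
  exact ⟨u, hu, hsS⟩

theorem exists_separator_of_contract [Fintype V] (hxy : G.Adj x y) {S' : Finset V}
    (hS' : Separates (contract G x y) (merge x y '' A) (merge x y '' B) S') (hk : S'.card < k)
    (h : ∀ S : Finset V, Separates G A B S → k ≤ S.card) :
    ∃ S : Finset V, Separates G A B S ∧ S.card = k ∧ x ∈ S ∧ y ∈ S := by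
  set S := Finset.univ.filter fun v => merge x y v ∈ S'
  have hmem : ∀ v, v ∈ S ↔ merge x y v ∈ S' := by simp [S]
  have hS : Separates G A B S := by
    convert hS'.of_contract
    ext
    exact hmem _
  have hSy : S ⊆ insert y S' := fun v hv => by
    by_cases hvy : v = y
    · simp [hvy]
    · simpa [hmem, merge_of_ne hvy, hvy] using hv
  have hxS' : x ∈ S' := by
    by_contra hx
    have hSS' : S ⊆ S' := fun v hv => by
      obtain rfl | hv' := Finset.mem_insert.1 (hSy hv)
      · exact absurd (by simpa [hmem] using hv) hx
      · exact hv'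
    exact absurd (h S hS) (not_le.2 (lt_of_le_of_lt (Finset.card_le_card hSS') hk))
  have hcard : S.card ≤ S'.card + 1 := (Finset.card_le_card hSy).trans (Finset.card_insert_le _ _)
  exact ⟨S, hS, le_antisymm (by omega) (h S hS), by simpa [hmem, merge_of_ne hxy.ne],
    by simpa [hmem]⟩

end Contraction

theorem menger [Fintype V] [DecidableEq V] (G : SimpleGraph V) (A B : Set V) (k : ℕ)
    (h : ∀ S : Finset V, Separates G A B S → k ≤ S.card) : HasDisjointWalks G A B k := by
  induction hn : G.edgeSet.ncard using Nat.strong_induction_on generalizing G A B with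
  | _ n ih =>
  subst hn
  by_cases hG : ∀ u v, ¬G.Adj u v
  · exact hasDisjointWalks_of_forall_not_adj hG h
  push Not at hG
  obtain ⟨x, y, hxy⟩ := hG
  by_cases hc : ∀ S : Finset V,
      Separates (contract G x y) (merge x y '' A) (merge x y '' B) S → k ≤ S.card
  · exact .of_contract hxy (ih _ (ncard_edgeSet_contract_lt hxy) _ _ _ hc rfl)
  push Not at hc
  obtain ⟨S', hS', hS'k⟩ := hc
  obtain ⟨S, hS, hSk, hx, hy⟩ := exists_separator_of_contract hxy hS' hS'k h
  have hlt : (G.deleteEdges {s(x, y)}).edgeSet.ncard < G.edgeSet.ncard := by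
    rw [edgeSet_deleteEdges]
    exact Set.ncard_sdiff_singleton_lt_of_mem hxy
  refine .glue hS hSk (.mono (ih _ hlt _ A S (fun T hT => ?_) rfl) (deleteEdges_le _))
    (.mono (ih _ hlt _ S B (fun T hT => ?_) rfl) (deleteEdges_le _))
  · exact h T (hS.of_deleteEdges_left hx hy hT)
  · exact h T (hS.of_deleteEdges_right hx hy hT)

theorem IsABWalk.exists_isABPath (h : IsABWalk G A B l) (hA : ∀ v ∈ l.tail, v ∉ A)
    (hB : ∀ v ∈ l.dropLast, v ∉ B) :
    ∃ (u v : V) (p : G.Walk u v), IsABPath G A B p ∧ p.support ⊆ l := by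
  classical
  have hne := h.ne_nil
  obtain ⟨a, ha, haA⟩ := h.2.1
  obtain ⟨b, hb, hbB⟩ := h.2.2
  rw [List.head?_eq_some_head hne, Option.mem_some_iff] at ha
  rw [List.getLast?_eq_some_getLast hne, Option.mem_some_iff] at hb
  have hsub : (Walk.ofSupport l hne h.1).bypass.support ⊆ l := fun w hw => by
    simpa using Walk.support_bypass_subset_support _ hw
  refine ⟨_, _, _, ⟨Walk.bypass_isPath _, ha ▸ haA, hb ▸ hbB, fun w hw hwA => ?_,
    fun w hw hwB => ?_⟩, hsub⟩
  · have hw := hsub hw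
    rw [← List.cons_head_tail hne, List.mem_cons] at hw
    exact hw.resolve_right fun hw' => hA w hw' hwA
  · have hw := hsub hw
    rw [← List.dropLast_append_getLast hne, List.mem_append, List.mem_singleton] at hw
    exact hw.resolve_left fun hw' => hB w hw' hwB

theorem HasDisjointWalks.exists_isABPath (h : HasDisjointWalks G A B k) :
    ∃ (u v : Fin k → V) (p : ∀ i, G.Walk (u i) (v i)), (∀ i, IsABPath G A B (p i)) ∧
      ∀ i j, i ≠ j → ∀ w, w ∈ (p i).support → w ∉ (p j).support := by
  obtain ⟨P, hP, hPd⟩ := h.exists_trim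
  choose u v p hp hsub using fun i => (hP i).1.exists_isABPath (hP i).2.1 (hP i).2.2
  exact ⟨u, v, p, hp, fun i j hij w hi hj => hPd hij (hsub i hi) (hsub j hj)⟩

end Menger

section Counting

variable {V : Type*} {G : SimpleGraph V}

theorem IsABPath.isABWalk_support {A B : Set V} {u v : V} {p : G.Walk u v}
    (h : IsABPath G A B p) : Menger.IsABWalk G A B p.support :=
  ⟨p.isChain_adj_support, ⟨u, by rw [← Walk.cons_tail_support]; rfl, h.2.1⟩,
    ⟨v, by simp [List.getLast?_eq_some_getLast p.support_ne_nil], h.2.2.1⟩⟩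

theorem card_le_sum_card_filter_mem [DecidableEq V] {ι : Type*} [Fintype ι] [DecidableEq ι]
    (S : Finset V) (f : ι → List V) (h : ∀ i, ∃ s ∈ f i, s ∈ S) :
    Fintype.card ι ≤ ∑ s ∈ S, (Finset.univ.filter fun i => s ∈ f i).card :=
  calc Fintype.card ι
      ≤ (S.biUnion fun s => Finset.univ.filter fun i => s ∈ f i).card :=
        Finset.card_le_card fun i _ => by
          obtain ⟨s, hs, hsS⟩ := h i
          exact Finset.mem_biUnion.2 ⟨s, hsS, by simpa using hs⟩
    _ ≤ _ := Finset.card_biUnion_le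

theorem card_le_sum_weight [DecidableEq V] {ι : Type*} [Fintype ι] {A : Set V}
    {A₁ A₂ B S : Finset V} (hS : Menger.Separates G A B S) (hA : ↑A₁ ⊆ A) {u v : ι → V} (p : ∀ j, G.Walk (u j) (v j))
    (hp : ∀ j, IsABPath G A₁ B (p j)) (havoid : ∀ j, ∀ w ∈ (p j).support, w ∉ A₂)
    (hmeet : ∀ j k, j ≠ k → ∀ w, w ∈ (p j).support → w ∈ (p k).support → w ∈ A₁)
    (hcount : ∀ a ∈ A₁, (Finset.univ.filter fun j => a ∈ (p j).support).card = 2) :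
    Fintype.card ι ≤ ∑ s ∈ S, if s ∈ A₁ then 2 else if s ∈ A₂ then 0 else 1 := by
  classical
  refine (card_le_sum_card_filter_mem S (fun j => (p j).support) fun j => ?_).trans
    (Finset.sum_le_sum fun s _ => ?_)
  · exact hS _ ((hp j).isABWalk_support.mono le_rfl hA subset_rfl)
  split_ifs with h₁ h₂
  · exact (hcount s h₁).le
  · simpa [Finset.filter_eq_empty_iff] using fun j hj => havoid j s hj h₂
  · exact Finset.card_le_one.2 fun j hj k hk => by_contra fun hjk =>
      h₁ (hmeet j k hjk s (by simpa using hj) (by simpa using hk))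

end Counting

theorem stmt_3_general {V : Type*} [Fintype V] [DecidableEq V] (G : SimpleGraph V)
    (A₁ A₂ B : Finset V) (h12 : Disjoint A₁ A₂)
    -- the family 𝒫₁ of A₁–B paths in G ∖ A₂
    (hP₁ : ∃ (u v : Fin (2 * A₁.card) → V) (p : ∀ j, G.Walk (u j) (v j)),
      (∀ j, IsABPath G (A₁ : Set V) (B : Set V) (p j)) ∧
      (∀ j, ∀ w ∈ (p j).support, w ∉ A₂) ∧
      (∀ j k, j ≠ k → ∀ w, w ∈ (p j).support → w ∈ (p k).support → w ∈ A₁) ∧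
      (∀ a ∈ A₁, (Finset.univ.filter fun j => a ∈ (p j).support).card = 2))
    -- the family 𝒫₂ of A₂–B paths in G ∖ A₁
    (hP₂ : ∃ (u v : Fin (2 * A₂.card) → V) (p : ∀ j, G.Walk (u j) (v j)),
      (∀ j, IsABPath G (A₂ : Set V) (B : Set V) (p j)) ∧
      (∀ j, ∀ w ∈ (p j).support, w ∉ A₁) ∧
      (∀ j k, j ≠ k → ∀ w, w ∈ (p j).support → w ∈ (p k).support → w ∈ A₂) ∧
      (∀ a ∈ A₂, (Finset.univ.filter fun j => a ∈ (p j).support).card = 2)) :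
    ∃ (u v : Fin (A₁.card + A₂.card) → V) (p : ∀ j, G.Walk (u j) (v j)),
      (∀ j, IsABPath G ((A₁ ∪ A₂ : Finset V) : Set V) (B : Set V) (p j)) ∧
      (∀ j k, j ≠ k → ∀ w, w ∈ (p j).support → w ∉ (p k).support) := by
  obtain ⟨u₁, v₁, p₁, hp₁, havoid₁, hmeet₁, hcount₁⟩ := hP₁
  obtain ⟨u₂, v₂, p₂, hp₂, havoid₂, hmeet₂, hcount₂⟩ := hP₂
  refine (Menger.menger G _ _ _ fun S hS => ?_).exists_isABPath
  have h₁ := card_le_sum_weight hS (by simp) p₁ hp₁ havoid₁ hmeet₁ hcount₁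
  have h₂ := card_le_sum_weight hS (by simp) p₂ hp₂ havoid₂ hmeet₂ hcount₂
  have hweight : ∀ s ∈ S, ((if s ∈ A₁ then 2 else if s ∈ A₂ then 0 else 1) +
      (if s ∈ A₂ then 2 else if s ∈ A₁ then 0 else 1)) = 2 := fun s _ => by
    have : s ∈ A₁ → s ∉ A₂ := fun h => Finset.disjoint_left.1 h12 h
    split_ifs <;> tauto
  have hsum := (Finset.sum_add_distrib.symm.trans (Finset.sum_congr rfl hweight)).trans
    (Finset.sum_const _)
  simp only [Fintype.card_fin, smul_eq_mul] at h₁ h₂ hsum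
  omega

/-- redundancy version of Menger's theorem. -/
theorem stmt_3 {V : Type*} [Fintype V] [DecidableEq V] (G : SimpleGraph V)
    (A₁ A₂ B : Finset V) (hA₁ : A₁.Nonempty) (hA₂ : A₂.Nonempty) (hB : B.Nonempty)
    (h12 : Disjoint A₁ A₂) (h1B : Disjoint A₁ B) (h2B : Disjoint A₂ B)
    -- the family 𝒫₁ of A₁–B paths in G ∖ A₂
    (hP₁ : ∃ (u v : Fin (2 * A₁.card) → V) (p : ∀ j, G.Walk (u j) (v j)),
      (∀ j, IsABPath G (A₁ : Set V) (B : Set V) (p j)) ∧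
      (∀ j, ∀ w ∈ (p j).support, w ∉ A₂) ∧
      (∀ j k, j ≠ k → ∀ w, w ∈ (p j).support → w ∈ (p k).support → w ∈ A₁) ∧
      (∀ a ∈ A₁, (Finset.univ.filter fun j => a ∈ (p j).support).card = 2))
    -- the family 𝒫₂ of A₂–B paths in G ∖ A₁
    (hP₂ : ∃ (u v : Fin (2 * A₂.card) → V) (p : ∀ j, G.Walk (u j) (v j)),
      (∀ j, IsABPath G (A₂ : Set V) (B : Set V) (p j)) ∧
      (∀ j, ∀ w ∈ (p j).support, w ∉ A₁) ∧
      (∀ j k, j ≠ k → ∀ w, w ∈ (p j).support → w ∈ (p k).support → w ∈ A₂) ∧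
      (∀ a ∈ A₂, (Finset.univ.filter fun j => a ∈ (p j).support).card = 2)) :
    ∃ (u v : Fin (A₁.card + A₂.card) → V) (p : ∀ j, G.Walk (u j) (v j)),
      (∀ j, IsABPath G ((A₁ ∪ A₂ : Finset V) : Set V) (B : Set V) (p j)) ∧
      (∀ j k, j ≠ k → ∀ w, w ∈ (p j).support → w ∉ (p k).support) :=
  stmt_3_general G A₁ A₂ B h12 hP₁ hP₂
end

section
/- Let s ≥ 2 and ℓ ≥ 0 be integers. Every finite simple graph G with edge density e(G)/|V(G)| ≥ 30·s·√(log s) + 2ℓ contains the disjoint union of K_s and a matching of size ℓ as a minor. -/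
/-!
Induction on `ℓ`, the case `ℓ = 0` being Kostochka's theorem. If `d(G) ≥ c + 2(ℓ + 1)`, pick any
edge `uv`. Since `deg u + deg v ≤ 2(n - 1)`, deleting `u` and `v` leaves at least
`(c + 2ℓ + 2)n - 2n + 2 ≥ (c + 2ℓ)(n - 2)` edges on `n - 2` vertices, so a model of `K_s + ℓK₂`
exists in `G - u - v`; the branch sets `{u}` and `{v}` extend it to a model of `K_s + (ℓ + 1)K₂`.
-/

open SimpleGraph

/-- `G` has an `H` minor: there is a model of `H` in `G`, i.e. a family of disjoint
connected branch sets joined by edges of `G` according to the edges of `H`. -/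
def HasMinor {V W : Type*} (G : SimpleGraph V) (H : SimpleGraph W) : Prop :=
  ∃ X : W → Set V, (∀ w, (G.induce (X w)).Connected) ∧
    (∀ w₁ w₂, w₁ ≠ w₂ → Disjoint (X w₁) (X w₂)) ∧
    (∀ w₁ w₂, H.Adj w₁ w₂ → ∃ a ∈ X w₁, ∃ b ∈ X w₂, G.Adj a b)

/-- The graph `K_s + ℓK₂`: disjoint union of a complete graph on `s` vertices and a
matching of size `ℓ`. -/
def ksPlusMatching (s l : ℕ) : SimpleGraph (Fin s ⊕ Fin l × Fin 2) :=
  SimpleGraph.fromRel (fun u v => match u, v with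
    | Sum.inl _, Sum.inl _ => True
    | Sum.inr ⟨i, _⟩, Sum.inr ⟨j, _⟩ => i = j
    | _, _ => False)

universe u

namespace SimpleGraph

variable {V : Type*} {G : SimpleGraph V}

noncomputable def density (G : SimpleGraph V) : ℝ := G.edgeSet.ncard / Nat.card V

lemma ncard_edgeSet_le_induce_compl_add_sum_degree [Fintype V] [DecidableRel G.Adj]
    (S : Finset V) :
    G.edgeSet.ncard ≤ (G.induce (↑S)ᶜ).edgeSet.ncard + ∑ x ∈ S, G.degree x := by
  classical
  have hcover : G.edgeSet ⊆
      Sym2.map Subtype.val '' (G.induce (↑S)ᶜ).edgeSet ∪ ⋃ x ∈ S, G.incidenceSet x := by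
    rintro ⟨a, b⟩ hab
    by_cases ha : a ∈ S
    · exact Or.inr (Set.mem_biUnion ha ⟨hab, Sym2.mem_mk_left a b⟩)
    by_cases hb : b ∈ S
    · exact Or.inr (Set.mem_biUnion hb ⟨hab, Sym2.mem_mk_right a b⟩)
    exact Or.inl ⟨s(⟨a, ha⟩, ⟨b, hb⟩), hab, rfl⟩
  calc G.edgeSet.ncard
      ≤ (Sym2.map Subtype.val '' (G.induce (↑S)ᶜ).edgeSet).ncard
        + (⋃ x ∈ S, G.incidenceSet x).ncard :=
        (Set.ncard_le_ncard hcover).trans (Set.ncard_union_le _ _)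
    _ ≤ (G.induce (↑S)ᶜ).edgeSet.ncard + ∑ x ∈ S, G.degree x := by
        gcongr
        · exact (Set.ncard_image_of_injective _ (Sym2.map.injective Subtype.val_injective)).le
        · refine (S.set_ncard_biUnion_le _).trans (Finset.sum_le_sum fun x _ ↦ ?_)
          rw [← Nat.card_coe_set_eq, Nat.card_eq_fintype_card, card_incidenceSet_eq_degree]

lemma exists_adj_le_density_induce_compl_pair [Fintype V] {d : ℝ} (hd : 0 ≤ d)
    (h : d + 2 ≤ G.density) : ∃ u v, G.Adj u v ∧ d ≤ (G.induce {u, v}ᶜ).density := by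
  classical
  set n := Nat.card V with hn
  have hn_pos : (0 : ℝ) < n := by
    refine (Nat.cast_nonneg n).lt_of_ne fun h0 ↦ ?_
    rw [density, ← hn, ← h0, div_zero] at h
    linarith
  have hedges : (d + 2) * n ≤ G.edgeSet.ncard := (le_div_iff₀ hn_pos).1 h
  have hchoose : (G.edgeSet.ncard : ℝ) ≤ n * (n - 1) / 2 := by
    rw [← Nat.cast_choose_two, ← coe_edgeFinset, Set.ncard_coe_finset, hn,
      Nat.card_eq_fintype_card]
    exact_mod_cast G.card_edgeFinset_le_card_choose_two
  have hn_ge : (3 : ℝ) ≤ n := by nlinarith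
  obtain ⟨u, v, huv⟩ : ∃ u v, G.Adj u v := by
    refine ne_bot_iff_exists_adj.1 (edgeSet_nonempty.1 (Set.nonempty_of_ncard_ne_zero ?_))
    exact_mod_cast (show (0 : ℝ) < G.edgeSet.ncard by nlinarith).ne'
  refine ⟨u, v, huv, ?_⟩
  have hcount := G.ncard_edgeSet_le_induce_compl_add_sum_degree {u, v}
  rw [Finset.coe_pair, Finset.sum_pair huv.ne] at hcount
  have hdeg (x : V) : G.degree x < n := by
    rw [hn, Nat.card_eq_fintype_card]
    exact G.degree_lt_card_verts x
  have hcard : Nat.card ↥({u, v}ᶜ : Set V) = n - 2 := by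
    rw [Nat.card_coe_set_eq, Set.ncard_compl, Set.ncard_pair huv.ne]
  have hn3 : 3 ≤ n := by exact_mod_cast hn_ge
  have hcount' : (G.edgeSet.ncard : ℝ) + 2 ≤ (G.induce {u, v}ᶜ).edgeSet.ncard + 2 * n := by
    have := hdeg u
    have := hdeg v
    exact_mod_cast (by omega : G.edgeSet.ncard + 2 ≤ (G.induce {u, v}ᶜ).edgeSet.ncard + 2 * n)
  rw [density, hcard, Nat.cast_sub (by omega), le_div_iff₀ (by push_cast; linarith)]
  push_cast
  linarith

end SimpleGraph

section Minor

variable {V V' W W' : Type*} {G : SimpleGraph V} {G' : SimpleGraph V'} {H : SimpleGraph W}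
  {H' : SimpleGraph W'} {X : W → Set V}

structure IsMinorModel (G : SimpleGraph V) (H : SimpleGraph W) (X : W → Set V) : Prop where
  connected (w : W) : (G.induce (X w)).Connected
  disjoint ⦃w₁ w₂ : W⦄ : w₁ ≠ w₂ → Disjoint (X w₁) (X w₂)
  exists_adj ⦃w₁ w₂ : W⦄ : H.Adj w₁ w₂ → ∃ a ∈ X w₁, ∃ b ∈ X w₂, G.Adj a b

lemma hasMinor_iff_exists_isMinorModel : HasMinor G H ↔ ∃ X, IsMinorModel G H X :=
  ⟨fun ⟨X, h₁, h₂, h₃⟩ ↦ ⟨X, ⟨h₁, h₂, h₃⟩⟩,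
    fun ⟨X, ⟨h₁, h₂, h₃⟩⟩ ↦ ⟨X, h₁, fun _ _ h ↦ h₂ h, fun _ _ h ↦ h₃ h⟩⟩

lemma IsMinorModel.comp_copy (hX : IsMinorModel G H X) (f : Copy H' H) :
    IsMinorModel G H' (X ∘ f) where
  connected w := hX.connected (f w)
  disjoint _ _ h := hX.disjoint (f.injective.ne h)
  exists_adj _ _ h := hX.exists_adj (f.toHom.map_adj h)

lemma IsMinorModel.image_copy {X : W → Set V'} (hX : IsMinorModel G' H X) (f : Copy G' G) :
    IsMinorModel G H fun w ↦ f '' X w where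
  connected w := by
    let φ : G'.induce (X w) →g G.induce (f '' X w) :=
      ⟨fun x ↦ ⟨f x, Set.mem_image_of_mem f x.2⟩, fun h ↦ f.toHom.map_adj h⟩
    refine (hX.connected w).map φ ?_
    rintro ⟨_, x, hx, rfl⟩
    exact ⟨⟨x, hx⟩, rfl⟩
  disjoint _ _ h := (Set.disjoint_image_iff f.injective).2 (hX.disjoint h)
  exists_adj _ _ h := by
    obtain ⟨a, ha, b, hb, hab⟩ := hX.exists_adj h
    exact ⟨f a, Set.mem_image_of_mem f ha, f b, Set.mem_image_of_mem f hb, f.toHom.map_adj hab⟩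

lemma IsMinorModel.sum {X' : W' → Set V} (hX : IsMinorModel G H X) (hX' : IsMinorModel G H' X')
    (hXX' : ∀ w w', Disjoint (X w) (X' w')) : IsMinorModel G (H ⊕g H') (Sum.elim X X') where
  connected
    | .inl w => hX.connected w
    | .inr w' => hX'.connected w'
  disjoint
    | .inl _, .inl _, h => hX.disjoint fun h' ↦ h (congrArg _ h')
    | .inl w, .inr w', _ => hXX' w w'
    | .inr w', .inl w, _ => (hXX' w w').symm
    | .inr _, .inr _, h => hX'.disjoint fun h' ↦ h (congrArg _ h')
  exists_adj
    | .inl _, .inl _, h => hX.exists_adj h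
    | .inr _, .inr _, h => hX'.exists_adj h

lemma SimpleGraph.Copy.isMinorModel_singleton (f : Copy H G) :
    IsMinorModel G H fun w ↦ {f w} where
  connected _ := Connected.of_subsingleton
  disjoint _ _ h := Set.disjoint_singleton.2 (f.injective.ne h)
  exists_adj _ _ h := ⟨_, rfl, _, rfl, f.toHom.map_adj h⟩

def SimpleGraph.Copy.ofAdj {u v : V} (h : G.Adj u v) : Copy (⊤ : SimpleGraph (Fin 2)) G :=
  ⟨⟨![u, v], by intro a b; fin_cases a <;> fin_cases b <;> simp [h, h.symm]⟩, by
    intro a b; fin_cases a <;> fin_cases b <;> simp [h.ne, h.ne.symm]⟩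

lemma HasMinor.of_isContained (h : HasMinor G H) (hH : H' ⊑ H) : HasMinor G H' := by
  obtain ⟨X, hX⟩ := hasMinor_iff_exists_isMinorModel.1 h
  obtain ⟨f⟩ := hH
  exact hasMinor_iff_exists_isMinorModel.2 ⟨_, hX.comp_copy f⟩

lemma HasMinor.sum_top_fin_two_of_adj {u v : V} (h : HasMinor (G.induce {u, v}ᶜ) H)
    (huv : G.Adj u v) : HasMinor G (H ⊕g (⊤ : SimpleGraph (Fin 2))) := by
  obtain ⟨X, hX⟩ := hasMinor_iff_exists_isMinorModel.1 h
  refine hasMinor_iff_exists_isMinorModel.2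
    ⟨_, (hX.image_copy (Copy.induce G _)).sum (Copy.ofAdj huv).isMinorModel_singleton ?_⟩
  intro w k
  rw [Set.disjoint_singleton_right]
  rintro ⟨⟨x, hx⟩, -, rfl⟩
  fin_cases k
  exacts [hx (Or.inl rfl), hx (Or.inr rfl)]

end Minor

section KsPlusMatching

variable {s l : ℕ}

@[simp] lemma ksPlusMatching_adj_inl_inl {i j : Fin s} :
    (ksPlusMatching s l).Adj (.inl i) (.inl j) ↔ i ≠ j := by
  simp [ksPlusMatching]

@[simp] lemma ksPlusMatching_adj_inr_inr {i j : Fin l} {k k' : Fin 2} :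
    (ksPlusMatching s l).Adj (.inr (i, k)) (.inr (j, k')) ↔ i = j ∧ k ≠ k' := by
  simp only [ksPlusMatching, fromRel_adj, ne_eq, Sum.inr.injEq, Prod.mk.injEq, eq_comm (a := j)]
  tauto

@[simp] lemma ksPlusMatching_not_adj_inl_inr {i : Fin s} {p : Fin l × Fin 2} :
    ¬ (ksPlusMatching s l).Adj (.inl i) (.inr p) := by
  simp [ksPlusMatching]

@[simp] lemma ksPlusMatching_not_adj_inr_inl {i : Fin s} {p : Fin l × Fin 2} :
    ¬ (ksPlusMatching s l).Adj (.inr p) (.inl i) := by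
  simp [ksPlusMatching]

lemma ksPlusMatching_zero_isContained (s : ℕ) :
    ksPlusMatching s 0 ⊑ (⊤ : SimpleGraph (Fin s)) :=
  isContained_top_iff.2 ⟨(Equiv.sumEmpty _ _).toEmbedding⟩

lemma ksPlusMatching_succ_isContained (s l : ℕ) :
    ksPlusMatching s (l + 1) ⊑ ksPlusMatching s l ⊕g (⊤ : SimpleGraph (Fin 2)) := by
  let f : Fin s ⊕ Fin (l + 1) × Fin 2 → (Fin s ⊕ Fin l × Fin 2) ⊕ Fin 2 :=
    Sum.elim (fun i ↦ .inl (.inl i))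
      fun p ↦ Fin.lastCases (motive := fun _ ↦ _) (.inr p.2) (fun j ↦ .inl (.inr (j, p.2))) p.1
  refine ⟨⟨⟨f, ?_⟩, ?_⟩⟩
  · rintro (i | ⟨i, k⟩) (j | ⟨j, k'⟩) h <;> simp at h
    · simpa [f]
    · obtain ⟨rfl, h⟩ := h
      induction i using Fin.lastCases <;> simpa [f]
  · rintro (i | ⟨i, k⟩) (j | ⟨j, k'⟩) h
    all_goals
      try induction i using Fin.lastCases
      all_goals try induction j using Fin.lastCases
      all_goals simp_all [f]

end KsPlusMatching

theorem hasMinor_ksPlusMatching_of_density {s : ℕ} {c : ℝ} (hc : 0 ≤ c)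
    (hK : ∀ (W : Type u) [Fintype W] (G : SimpleGraph W), c ≤ G.density →
      HasMinor G (⊤ : SimpleGraph (Fin s)))
    (l : ℕ) {V : Type u} [Fintype V] (G : SimpleGraph V) (h : c + 2 * l ≤ G.density) :
    HasMinor G (ksPlusMatching s l) := by
  induction l generalizing V with
  | zero => exact (hK V G (by simpa using h)).of_isContained (ksPlusMatching_zero_isContained s)
  | succ l ih =>
    classical
    obtain ⟨u, v, huv, hdens⟩ :=
      G.exists_adj_le_density_induce_compl_pair (d := c + 2 * l) (by positivity)
        (by push_cast at h; linarith)
    exact ((ih _ hdens).sum_top_fin_two_of_adj huv).of_isContained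
      (ksPlusMatching_succ_isContained s l)

/-- (given Kostochka's theorem) every graph of density at least
`30·s·√(log s) + 2ℓ` contains `K_s + ℓK₂` as a minor. -/
theorem stmt_4 {V : Type u} [Fintype V] (s l : ℕ) (hs : 2 ≤ s)
    (kostochka : ∀ (W : Type u) [Fintype W] (G' : SimpleGraph W) (t : ℕ), 2 ≤ t →
      30 * (t : ℝ) * Real.sqrt (Real.log t) ≤ (G'.edgeSet.ncard : ℝ) / (Nat.card W : ℝ) →
      HasMinor G' (⊤ : SimpleGraph (Fin t)))
    (G : SimpleGraph V)
    (hd : 30 * (s : ℝ) * Real.sqrt (Real.log s) + 2 * l ≤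
      (G.edgeSet.ncard : ℝ) / (Nat.card V : ℝ)) :
    HasMinor G (ksPlusMatching s l) :=
  hasMinor_ksPlusMatching_of_density (by positivity) (fun W _ G' ↦ kostochka W G' s hs) l G hd
end

section
/- Every graph G with at least one edge contains a subgraph G' with vertex connectivity κ(G') ≥ d(G)/2, where d(G) = e(G)/|V(G)| is the density of G. -/
/-! With `d = e(G)/|G|` and `k = ⌊d/2⌋`, it suffices to find a `(k+1)`-connected subgraph; for
`k = 0` a single edge does. For `k ≥ 1` (Mader's argument) call `S ⊆ V` a Mader set if
`|S| ≥ 2k` and `e(S) > d(|S| - k)`; `V` is one. In an inclusion-minimal Mader set `S` every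
vertex has more than `d ≥ 2k` neighbours, as deleting a vertex of smaller degree leaves a Mader
set. If deleting at most `k` vertices disconnected `G[S]`, then `S = A ∪ B` with `|A ∩ B| ≤ k`
and every edge inside `A` or inside `B`; both sides contain a vertex with all its neighbours, so
they have more than `2k` vertices, and minimality gives
`e(S) ≤ e(A) + e(B) ≤ d(|A| + |B| - 2k) ≤ d(|S| - k)`, a contradiction. -/

open SimpleGraph

/-- `G` is `k`-connected: more than `k` vertices, and deleting any set of fewer
than `k` vertices leaves a connected graph. -/
def KConnected {V : Type*} (G : SimpleGraph V) (k : ℕ) : Prop :=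
  k < Nat.card V ∧ ∀ X : Set V, X.ncard < k → (G.induce Xᶜ).Connected

/-- The vertex connectivity `κ(G)`. -/
noncomputable def vertexConn {V : Type*} (G : SimpleGraph V) : ℕ :=
  sSup {k | KConnected G k}

open Finset

namespace SimpleGraph

variable {V : Type*}

lemma KConnected.le_vertexConn {G : SimpleGraph V} {k : ℕ} (h : KConnected G k) :
    k ≤ vertexConn G :=
  le_csSup ⟨Nat.card V, fun _ hj => hj.1.le⟩ h

lemma kConnected_one_of_connected {G : SimpleGraph V} (hG : G.Connected)
    (hcard : 1 < Nat.card V) : KConnected G 1 := by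
  have : Finite V := Nat.finite_of_card_ne_zero (by omega)
  refine ⟨hcard, fun X hX => ?_⟩
  obtain rfl : X = ∅ := (Set.ncard_eq_zero).mp (by omega)
  rw [Set.compl_empty]
  exact (induceUnivIso G).symm.connected_iff.mp hG

def induceInduceComplIso (G : SimpleGraph V) (s : Set V) (X : Set s) :
    (G.induce s).induce Xᶜ ≃g G.induce (s \ Subtype.val '' X) where
  toFun x := ⟨x.1.1, x.1.2, fun ⟨y, hy, hyx⟩ => x.2 (Subtype.ext hyx ▸ hy)⟩
  invFun x := ⟨⟨x.1, x.2.1⟩, fun h => x.2.2 ⟨_, h, rfl⟩⟩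
  map_rel_iff' := Iff.rfl

lemma exists_adj_closed_of_not_preconnected_induce {G : SimpleGraph V} {s : Set V}
    (h : ¬(G.induce s).Preconnected) :
    ∃ C ⊆ s, ∃ a ∈ C, ∃ b ∈ s \ C, ∀ u ∈ C, ∀ w ∈ s, G.Adj u w → w ∈ C := by
  obtain ⟨a, b, hab⟩ : ∃ a b : s, ¬(G.induce s).Reachable a b := by
    simpa [Preconnected] using h
  refine ⟨{v | ∃ hv : v ∈ s, (G.induce s).Reachable a ⟨v, hv⟩}, fun v hv => hv.1,
    a, ⟨a.2, .rfl⟩, b, ⟨b.2, fun ⟨_, hb⟩ => hab hb⟩, ?_⟩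
  rintro u ⟨hu, hau⟩ w hw huw
  exact ⟨hw, hau.trans (Adj.reachable (G := G.induce s) (u := ⟨u, hu⟩) (v := ⟨w, hw⟩) huw)⟩

section MaderSet

variable (G : SimpleGraph V) [DecidableRel G.Adj]

def edgesIn (S : Finset V) : Finset (Sym2 V) := {e ∈ S.sym2 | e ∈ G.edgeSet}

def neighborsIn (S : Finset V) (v : V) : Finset V := {w ∈ S | G.Adj v w}

variable {G}

@[simp]
lemma mk_mem_edgesIn {S : Finset V} {x y : V} :
    s(x, y) ∈ G.edgesIn S ↔ x ∈ S ∧ y ∈ S ∧ G.Adj x y := by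
  simp [edgesIn, and_assoc]

lemma card_edgesIn_le_choose_two (S : Finset V) : #(G.edgesIn S) ≤ (#S).choose 2 := by
  classical
  rw [← Sym2.card_image_offDiag]
  refine card_le_card fun e he => ?_
  induction e with
  | _ x y =>
    obtain ⟨hx, hy, hxy⟩ := mk_mem_edgesIn.mp he
    exact mem_image.mpr ⟨(x, y), mem_offDiag.mpr ⟨hx, hy, hxy.ne⟩, rfl⟩

lemma card_edgesIn_le_card_edgesIn_erase_add [DecidableEq V] (S : Finset V) (v : V) :
    #(G.edgesIn S) ≤ #(G.edgesIn (S.erase v)) + #(G.neighborsIn S v) := by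
  have hsub : G.edgesIn S ⊆ G.edgesIn (S.erase v) ∪ (G.neighborsIn S v).image (s(v, ·)) := by
    intro e he
    induction e with
    | _ x y =>
      obtain ⟨hx, hy, hxy⟩ := mk_mem_edgesIn.mp he
      by_cases hvx : v = x
      · subst hvx
        exact mem_union_right _ (mem_image.mpr ⟨y, by simp [neighborsIn, hy, hxy], rfl⟩)
      by_cases hvy : v = y
      · subst hvy
        exact mem_union_right _ (mem_image.mpr
          ⟨x, by simp [neighborsIn, hx, hxy.symm], Sym2.eq_swap⟩)
      · simp [mem_erase, hx, hy, hxy, Ne.symm hvx, Ne.symm hvy]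
  exact (card_le_card hsub).trans
    ((card_union_le _ _).trans (Nat.add_le_add_left card_image_le _))

lemma edgesIn_univ [Fintype V] : G.edgesIn univ = G.edgeFinset := by
  ext e
  simp [edgesIn]

lemma neighborsIn_subset_of_cover [DecidableEq V] {S A B : Finset V}
    (hcover : G.edgesIn S ⊆ G.edgesIn A ∪ G.edgesIn B) {a : V} (haB : a ∉ B) (ha : a ∈ S) :
    G.neighborsIn S a ⊆ A := by
  intro w hw
  obtain ⟨hwS, haw⟩ := mem_filter.mp hw
  rcases mem_union.mp (hcover (mk_mem_edgesIn.mpr ⟨ha, hwS, haw⟩)) with h | h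
  · exact (mk_mem_edgesIn.mp h).2.1
  · exact absurd (mk_mem_edgesIn.mp h).1 haB

def IsMaderSet (k : ℕ) (γ : ℝ) (S : Finset V) : Prop :=
  2 * k ≤ #S ∧ γ * (#S - k) < #(G.edgesIn S)

variable {k : ℕ} {γ : ℝ} {S : Finset V}

lemma IsMaderSet.two_mul_lt_card (hk : 0 < k) (hγ : 2 * k ≤ γ) (hS : G.IsMaderSet k γ S) :
    2 * k < #S := by
  refine hS.1.lt_of_ne fun hcard => ?_
  have hchoose : ((2 * k).choose 2 : ℝ) = k * (2 * k - 1) := by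
    rw [Nat.cast_choose_two]
    push_cast
    ring
  have hedges : (#(G.edgesIn S) : ℝ) ≤ k * (2 * k - 1) := by
    rw [← hchoose, hcard]
    exact_mod_cast card_edgesIn_le_choose_two S
  have hk' : (1 : ℝ) ≤ k := by exact_mod_cast hk
  have hS2 := hS.2
  rw [← hcard] at hS2
  push_cast at hS2
  nlinarith

variable [DecidableEq V]

lemma lt_card_neighborsIn_of_minimal (hk : 0 < k) (hγ : 2 * k ≤ γ)
    (hS : Minimal (G.IsMaderSet k γ) S) {v : V} (hv : v ∈ S) : γ < #(G.neighborsIn S v) := by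
  by_contra! hdeg
  have hlt := hS.prop.two_mul_lt_card hk hγ
  refine hS.not_prop_of_lt (erase_ssubset hv) ⟨by rw [card_erase_of_mem hv]; omega, ?_⟩
  have herase : (#(G.edgesIn S) : ℝ) ≤ #(G.edgesIn (S.erase v)) + #(G.neighborsIn S v) := by
    exact_mod_cast card_edgesIn_le_card_edgesIn_erase_add S v
  rw [card_erase_of_mem hv, Nat.cast_sub (by omega)]
  push_cast
  linarith [hS.prop.2]

lemma card_edgesIn_le_of_minimal (hk : 0 < k) (hγ : 2 * k ≤ γ)
    (hS : Minimal (G.IsMaderSet k γ) S) {A : Finset V} (hAS : A ⊂ S) {a : V} (ha : a ∈ A)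
    (hN : G.neighborsIn S a ⊆ A) : (#(G.edgesIn A) : ℝ) ≤ γ * (#A - k) := by
  have hdeg := lt_card_neighborsIn_of_minimal hk hγ hS (hAS.subset ha)
  have hcard : #(G.neighborsIn S a) < #A :=
    card_lt_card ⟨hN, fun h => G.irrefl (mem_filter.mp (h ha)).2⟩
  have h2k : 2 * k ≤ #A := by
    have : (2 * k : ℝ) < #A := hγ.trans_lt (hdeg.trans (by exact_mod_cast hcard))
    exact_mod_cast this.le
  simpa [IsMaderSet, h2k] using hS.not_prop_of_lt hAS

lemma not_separation_of_minimal (hk : 0 < k) (hγ : 2 * k ≤ γ)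
    (hS : Minimal (G.IsMaderSet k γ) S) {A B : Finset V} (hAB : A ∪ B = S)
    (hinter : #(A ∩ B) ≤ k)
    (hcover : G.edgesIn S ⊆ G.edgesIn A ∪ G.edgesIn B)
    {a b : V} (haA : a ∈ A) (haB : a ∉ B) (hbB : b ∈ B) (hbA : b ∉ A) : False := by
  have hAS : A ⊆ S := hAB ▸ subset_union_left
  have hBS : B ⊆ S := hAB ▸ subset_union_right
  have hA := card_edgesIn_le_of_minimal hk hγ hS ⟨hAS, fun h => hbA (h (hBS hbB))⟩ haA
    (neighborsIn_subset_of_cover hcover haB (hAS haA))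
  have hB := card_edgesIn_le_of_minimal hk hγ hS ⟨hBS, fun h => haB (h (hAS haA))⟩ hbB
    (neighborsIn_subset_of_cover (union_comm (G.edgesIn A) _ ▸ hcover) hbA (hBS hbB))
  have hcards : (#A + #B : ℝ) ≤ #S + k := by
    have := card_union_add_card_inter A B
    rw [hAB] at this
    exact_mod_cast (by omega : #A + #B ≤ #S + k)
  have hγ0 : 0 ≤ γ := le_trans (by positivity) hγ
  refine lt_irrefl (#(G.edgesIn S) : ℝ) ?_
  calc (#(G.edgesIn S) : ℝ)
      ≤ #(G.edgesIn A) + #(G.edgesIn B) := by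
        exact_mod_cast (card_le_card hcover).trans (card_union_le _ _)
    _ ≤ γ * (#A - k) + γ * (#B - k) := add_le_add hA hB
    _ = γ * (#A + #B - 2 * k) := by ring
    _ ≤ γ * (#S - k) := mul_le_mul_of_nonneg_left (by linarith) hγ0
    _ < #(G.edgesIn S) := hS.prop.2

lemma connected_induce_sdiff_of_minimal (hk : 0 < k) (hγ : 2 * k ≤ γ)
    (hS : Minimal (G.IsMaderSet k γ) S) {Y : Finset V} (hY : #Y ≤ k) :
    (G.induce (↑S \ ↑Y : Set V)).Connected := by
  have hlt := hS.prop.two_mul_lt_card hk hγ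
  rw [connected_iff]
  refine ⟨?_, ?_⟩
  · by_contra hpre
    obtain ⟨C, hCs, a, haC, b, ⟨⟨hbS, hbY⟩, hbC⟩, hclosed⟩ :=
      exists_adj_closed_of_not_preconnected_induce hpre
    have haS : a ∈ S := (hCs haC).1
    rw [mem_coe] at hbS hbY
    classical
    have hCnbr : ∀ u ∈ C, ∀ w ∈ S, G.Adj u w → w ∈ C ∨ w ∈ Y := fun u hu w hw huw =>
      (em (w ∈ Y)).elim .inr fun hwY => .inl (hclosed u hu w ⟨hw, hwY⟩ huw)
    refine not_separation_of_minimal hk hγ hS (A := {v ∈ S | v ∈ C ∨ v ∈ Y})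
      (B := {v ∈ S | v ∉ C}) (a := a) (b := b) ?_ ?_ ?_ ?_ ?_ ?_ ?_
    · ext v
      by_cases v ∈ C <;> simp +contextual [*]
    · refine (card_le_card fun v hv => ?_).trans hY
      simp only [mem_inter, mem_filter] at hv
      exact hv.1.2.resolve_left hv.2.2
    · intro e he
      induction e with
      | _ x y =>
        obtain ⟨hx, hy, hxy⟩ := mk_mem_edgesIn.mp he
        by_cases hxC : x ∈ C
        · simp [hx, hy, hxy, hxC, hCnbr x hxC y hy hxy]
        by_cases hyC : y ∈ C
        · simp [hx, hy, hxy, hyC, hCnbr y hyC x hx hxy.symm]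
        · simp [hx, hy, hxy, hxC, hyC]
    · simp [haS, haC]
    · simp [haC]
    · simp [hbS, hbC]
    · simp [hbC, hbY]
  · obtain ⟨v, hvS, hvY⟩ := exists_mem_notMem_of_card_lt_card (s := Y) (t := S) (by omega)
    exact ⟨⟨v, hvS, hvY⟩⟩

lemma kConnected_induce_of_minimal (hk : 0 < k) (hγ : 2 * k ≤ γ)
    (hS : Minimal (G.IsMaderSet k γ) S) :
    KConnected (G.induce (S : Set V)) (k + 1) := by
  have hlt := hS.prop.two_mul_lt_card hk hγ
  refine ⟨by rw [Nat.card_coe_set_eq, Set.ncard_coe_finset]; omega, fun X hX => ?_⟩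
  classical
  let Y : Finset V := X.toFinset.map (Function.Embedding.subtype _)
  have hYX : (Y : Set V) = Subtype.val '' X := by simp [Y]
  have hY : #Y ≤ k := by
    rw [card_map, ← Set.ncard_eq_toFinset_card']
    omega
  rw [(induceInduceComplIso G S X).connected_iff, ← hYX]
  exact connected_induce_sdiff_of_minimal hk hγ hS hY

lemma exists_kConnected_induce [Fintype V] [Nonempty V] (hk : 0 < k)
    (hm : 2 * k * Fintype.card V ≤ #G.edgeFinset) :
    ∃ S : Finset V, KConnected (G.induce (S : Set V)) (k + 1) := by
  set n := Fintype.card V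
  set m := #G.edgeFinset
  have hn : 0 < n := Fintype.card_pos
  have hγ : (2 * k : ℝ) ≤ m / n := by
    rw [le_div_iff₀ (by positivity)]
    exact_mod_cast hm
  have hchoose : 2 * k * n < n * n :=
    calc 2 * k * n ≤ n.choose 2 := hm.trans G.card_edgeFinset_le_card_choose_two
      _ < n * n := by
        rw [Nat.choose_two_right]
        exact (Nat.div_le_self _ _).trans_lt (Nat.mul_lt_mul_of_pos_left (by omega) hn)
  have huniv : G.IsMaderSet k (m / n) univ := by
    refine ⟨by rw [card_univ]; exact (Nat.lt_of_mul_lt_mul_right hchoose).le, ?_⟩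
    rw [card_univ, edgesIn_univ, mul_sub, div_mul_cancel₀ _ (by positivity)]
    have : (0 : ℝ) < m / n * k := by
      have : (0 : ℝ) < k := by exact_mod_cast hk
      nlinarith
    linarith
  obtain ⟨S, -, hS⟩ := exists_minimal_le_of_wellFoundedLT _ univ huniv
  exact ⟨S, kConnected_induce_of_minimal hk hγ hS⟩

end MaderSet

lemma exists_subgraph_kConnected [Fintype V] {G : SimpleGraph V} {k : ℕ}
    (hE : G.edgeSet.Nonempty) (hm : 2 * k * Fintype.card V ≤ G.edgeSet.ncard) :
    ∃ H : G.Subgraph, KConnected H.coe (k + 1) := by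
  classical
  obtain ⟨e, he⟩ := hE
  induction e with
  | _ x y =>
    have hxy : G.Adj x y := he
    rcases k.eq_zero_or_pos with rfl | hk
    · refine ⟨G.subgraphOfAdj hxy, kConnected_one_of_connected
        (Subgraph.connected_iff'.mp (Subgraph.subgraphOfAdj_connected hxy)) ?_⟩
      rw [Nat.card_coe_set_eq, subgraphOfAdj_verts, Set.ncard_pair hxy.ne]
      norm_num
    · have : Nonempty V := ⟨x⟩
      rw [← coe_edgeFinset, Set.ncard_coe_finset] at hm
      obtain ⟨S, hS⟩ := exists_kConnected_induce hk hm
      exact ⟨(⊤ : G.Subgraph).induce S, induce_eq_coe_induce_top (G := G) S ▸ hS⟩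

end SimpleGraph

/-- Mader: every graph `G` with at least one edge contains a
subgraph `G'` with `κ(G') ≥ d(G)/2` where `d(G) = e(G)/|V(G)|`. -/
theorem stmt_9 {V : Type*} [Fintype V] (G : SimpleGraph V)
    (hE : G.edgeSet.Nonempty) :
    ∃ H : G.Subgraph, (G.edgeSet.ncard : ℝ) / (Fintype.card V : ℝ) / 2 ≤
      (vertexConn H.coe : ℝ) := by
  set d : ℝ := (G.edgeSet.ncard : ℝ) / (Fintype.card V : ℝ) / 2
  have hn : 0 < Fintype.card V := Fintype.card_pos_iff.mpr ⟨hE.some.out.1⟩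
  have hm : 2 * ⌊d⌋₊ * Fintype.card V ≤ G.edgeSet.ncard := by
    have hfloor : (⌊d⌋₊ : ℝ) ≤ d := Nat.floor_le (by positivity)
    have : (2 * ⌊d⌋₊ * Fintype.card V : ℝ) ≤ G.edgeSet.ncard := by
      calc (2 * ⌊d⌋₊ * Fintype.card V : ℝ) ≤ 2 * d * Fintype.card V := by gcongr
        _ = G.edgeSet.ncard := by simp only [d]; field_simp
    exact_mod_cast this
  obtain ⟨H, hH⟩ := exists_subgraph_kConnected hE hm
  exact ⟨H, (Nat.lt_floor_add_one d).le.trans (by exact_mod_cast hH.le_vertexConn)⟩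
end

section
/- Duchet–Meyniel: If G is a finite simple graph with no K_t minor, then for every non-empty subgraph H of G, |V(H)| ≤ 2(t−1)·α(H); equivalently, the Hall ratio of G is at most 2(t−1). -/
open SimpleGraph

/-- The independence number of a graph. -/
noncomputable def indepNum {V : Type*} (G : SimpleGraph V) : ℕ :=
  sSup {n | ∃ I : Set V, (∀ u ∈ I, ∀ v ∈ I, ¬ G.Adj u v) ∧ I.ncard = n}

/-!
Induction on `t`, and for fixed `t` on `|S|`. For nonempty `S`, choose a connected `D ⊆ S` with
`|D| ≤ 2 α(D)` maximising `|S ∩ N[D]|`, where `N[D]` is the closed neighbourhood. If some `x ∈ S`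
outside `N[D]` were adjacent to some `y ∈ N[D] \ D`, adding the path `x y` to `D` would keep these
properties and enlarge `S ∩ N[D]`: as `x` has no neighbour in `D`, it extends a maximum independent
set of `D`. So `A = S ∩ N[D]` has no edges to `R = S \ N[D]`, and `α(A) + α(R) ≤ α(S)`. Since `D`
is connected and dominates `A \ D`, a `K_{t-1}` minor in `A \ D` would give a `K_t` minor in `A`;
hence `|A| ≤ 2 α(D) + 2(t-2) α(A \ D) ≤ 2(t-1) α(A)`, while `|R| ≤ 2(t-1) α(R)` by induction.
-/

section

variable {V : Type*} {G : SimpleGraph V}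

lemma SimpleGraph.IsIndepSet.not_adj {I : Set V} (hI : G.IsIndepSet I) {u v : V} (hu : u ∈ I)
    (hv : v ∈ I) : ¬ G.Adj u v :=
  fun huv => hI hu hv huv.ne huv

lemma isIndepSet_iff_forall_not_adj {I : Set V} :
    G.IsIndepSet I ↔ ∀ u ∈ I, ∀ v ∈ I, ¬ G.Adj u v :=
  ⟨fun h _ hu _ hv => h.not_adj hu hv, fun h u hu v hv _ => h u hu v hv⟩

section IndepNumOn

variable [Finite V] {S T I : Set V}

lemma bddAbove_indepSet_ncard (S : Set V) :
    BddAbove {n | ∃ I : Set V, I ⊆ S ∧ (∀ u ∈ I, ∀ v ∈ I, ¬ G.Adj u v) ∧ I.ncard = n} :=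
  ⟨Nat.card V, by rintro n ⟨I, -, -, rfl⟩; exact Set.ncard_le_card I⟩

lemma le_indepNumOn (hIS : I ⊆ S) (hI : G.IsIndepSet I) : I.ncard ≤ indepNumOn G S :=
  le_csSup (bddAbove_indepSet_ncard S) ⟨I, hIS, isIndepSet_iff_forall_not_adj.mp hI, rfl⟩

lemma exists_isIndepSet_ncard_eq_indepNumOn (S : Set V) :
    ∃ I ⊆ S, G.IsIndepSet I ∧ I.ncard = indepNumOn G S := by
  have hne : {n | ∃ I : Set V, I ⊆ S ∧ (∀ u ∈ I, ∀ v ∈ I, ¬ G.Adj u v) ∧ I.ncard = n}.Nonempty :=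
    ⟨0, ∅, Set.empty_subset S, by simp, by simp⟩
  obtain ⟨I, hIS, hI, hcard⟩ := Nat.sSup_mem hne (bddAbove_indepSet_ncard S)
  exact ⟨I, hIS, isIndepSet_iff_forall_not_adj.mpr hI, hcard⟩

lemma indepNumOn_mono (hST : S ⊆ T) : indepNumOn G S ≤ indepNumOn G T := by
  obtain ⟨I, hIS, hI, hcard⟩ := exists_isIndepSet_ncard_eq_indepNumOn (G := G) S
  exact hcard ▸ le_indepNumOn (hIS.trans hST) hI

lemma indepNumOn_add_indepNumOn_le_union (hST : Disjoint S T)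
    (hadj : ∀ u ∈ S, ∀ v ∈ T, ¬ G.Adj u v) :
    indepNumOn G S + indepNumOn G T ≤ indepNumOn G (S ∪ T) := by
  obtain ⟨I, hIS, hI, hIcard⟩ := exists_isIndepSet_ncard_eq_indepNumOn (G := G) S
  obtain ⟨J, hJT, hJ, hJcard⟩ := exists_isIndepSet_ncard_eq_indepNumOn (G := G) T
  rw [← hIcard, ← hJcard, ← Set.ncard_union_eq (hST.mono hIS hJT)]
  refine le_indepNumOn (Set.union_subset_union hIS hJT) ?_
  rw [isIndepSet_iff_forall_not_adj]
  rintro u (hu | hu) v (hv | hv)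
  · exact hI.not_adj hu hv
  · exact hadj u (hIS hu) v (hJT hv)
  · exact fun h => hadj v (hIS hv) u (hJT hu) h.symm
  · exact hJ.not_adj hu hv

lemma indepNumOn_le_indepNum_coe (H : G.Subgraph) :
    indepNumOn G H.verts ≤ _root_.indepNum H.coe := by
  obtain ⟨I, hIS, hI, hcard⟩ := exists_isIndepSet_ncard_eq_indepNumOn (G := G) H.verts
  have hbdd :
      BddAbove {n | ∃ J : Set H.verts, (∀ u ∈ J, ∀ v ∈ J, ¬ H.coe.Adj u v) ∧ J.ncard = n} :=
    ⟨Nat.card H.verts, by rintro n ⟨J, -, rfl⟩; exact Set.ncard_le_card J⟩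
  refine hcard ▸ le_csSup hbdd ⟨Subtype.val ⁻¹' I, fun u hu v hv huv => ?_, ?_⟩
  · exact hI.not_adj hu hv (H.adj_sub huv)
  · exact Set.ncard_preimage_of_injective_subset_range Subtype.val_injective (by simpa using hIS)

end IndepNumOn

def closedNbhdSet (G : SimpleGraph V) (D : Set V) : Set V :=
  D ∪ {v | ∃ d ∈ D, G.Adj v d}

lemma closedNbhdSet_mono {D D' : Set V} (h : D ⊆ D') : closedNbhdSet G D ⊆ closedNbhdSet G D' :=
  Set.union_subset_union h fun _ ⟨d, hd, hvd⟩ => ⟨d, h hd, hvd⟩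

section ConnectedDominating

variable [Finite V] {S D : Set V}

lemma ncard_union_pair_le_two_mul_indepNumOn (hD : D.ncard ≤ 2 * indepNumOn G D) {x y : V}
    (hx : x ∉ closedNbhdSet G D) (hy : y ∉ D) (hxy : G.Adj x y) :
    ({x, y} ∪ D).ncard ≤ 2 * indepNumOn G ({x, y} ∪ D) := by
  obtain ⟨I, hID, hI, hIcard⟩ := exists_isIndepSet_ncard_eq_indepNumOn (G := G) D
  have hxD : x ∉ D := fun h => hx (Or.inl h)
  have hxI : G.IsIndepSet (insert x I) :=
    hI.insert fun u hu _ => ⟨fun hxu => hx (Or.inr ⟨u, hID hu, hxu⟩),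
      fun hux => hx (Or.inr ⟨u, hID hu, hux.symm⟩)⟩
  have hcard : ({x, y} ∪ D).ncard = D.ncard + 2 := by
    rw [Set.insert_union, Set.singleton_union, Set.ncard_insert_of_notMem (by simp [hxD, hxy.ne]),
      Set.ncard_insert_of_notMem hy]
  have hxIcard : (insert x I).ncard = I.ncard + 1 :=
    Set.ncard_insert_of_notMem fun h => hxD (hID h)
  have := le_indepNumOn (S := {x, y} ∪ D)
    (Set.insert_subset (by simp) (hID.trans Set.subset_union_right)) hxI
  omega

lemma exists_connected_closedNbhd_isolated (hS : S.Nonempty) :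
    ∃ D ⊆ S, (G.induce D).Connected ∧ D.ncard ≤ 2 * indepNumOn G D ∧
      ∀ x ∈ S \ closedNbhdSet G D, ∀ y ∈ S ∩ closedNbhdSet G D, ¬ G.Adj x y := by
  obtain ⟨v, hv⟩ := hS
  let P := {D | D ⊆ S ∧ (G.induce D).Connected ∧ D.ncard ≤ 2 * indepNumOn G D}
  have hvP : {v} ∈ P := ⟨Set.singleton_subset_iff.mpr hv, by
    rw [induce_singleton_eq_top]; exact connected_top, by
    have := le_indepNumOn (G := G) subset_rfl (Set.pairwise_singleton v G.Adjᶜ)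
    simp only [Set.ncard_singleton] at this ⊢
    omega⟩
  obtain ⟨D, ⟨hDS, hDconn, hDcard⟩, hmax⟩ :=
    Set.exists_max_image P (fun D => (S ∩ closedNbhdSet G D).ncard) (Set.toFinite P) ⟨_, hvP⟩
  refine ⟨D, hDS, hDconn, hDcard, fun x ⟨hxS, hx⟩ y ⟨hyS, hy⟩ hxy => ?_⟩
  have hyD : y ∉ D := fun h => hx (Or.inr ⟨y, h, hxy⟩)
  obtain ⟨d, hd, hyd⟩ : ∃ d ∈ D, G.Adj y d := hy.resolve_left hyD
  have hP : {x, y} ∪ D ∈ P :=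
    ⟨Set.union_subset (Set.pair_subset hxS hyS) hDS,
      connected_induce_union (induce_pair_connected_of_adj hxy).preconnected hDconn.preconnected
        (by simp) hd hyd,
      ncard_union_pair_le_two_mul_indepNumOn hDcard hx hyD hxy⟩
  have hlt : S ∩ closedNbhdSet G D ⊂ S ∩ closedNbhdSet G ({x, y} ∪ D) :=
    (Set.ssubset_iff_of_subset (Set.inter_subset_inter_right _
      (closedNbhdSet_mono Set.subset_union_right))).mpr
      ⟨x, ⟨hxS, Or.inl (by simp)⟩, fun h => hx h.2⟩
  exact (hmax _ hP).not_gt (Set.ncard_lt_ncard hlt)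

end ConnectedDominating

def HasCliqueMinorIn (G : SimpleGraph V) (S : Set V) (k : ℕ) : Prop :=
  ∃ X : Fin k → Set V, (∀ i, X i ⊆ S) ∧ (∀ i, (G.induce (X i)).Connected) ∧
    (∀ i j, i ≠ j → Disjoint (X i) (X j)) ∧ (∀ i j, i ≠ j → ∃ a ∈ X i, ∃ b ∈ X j, G.Adj a b)

namespace HasCliqueMinorIn

variable {S T D : Set V} {k : ℕ}

lemma mono (hST : S ⊆ T) (h : HasCliqueMinorIn G S k) : HasCliqueMinorIn G T k :=
  let ⟨X, hXS, hconn, hdisj, hadj⟩ := h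
  ⟨X, fun i => (hXS i).trans hST, hconn, hdisj, hadj⟩

lemma hasMinor (h : HasCliqueMinorIn G S k) : HasMinor G (⊤ : SimpleGraph (Fin k)) :=
  let ⟨X, _, hconn, hdisj, hadj⟩ := h
  ⟨X, hconn, hdisj, fun i j hij => hadj i j hij.ne⟩

lemma of_nonempty (hS : S.Nonempty) : HasCliqueMinorIn G S 1 := by
  obtain ⟨v, hv⟩ := hS
  refine ⟨fun _ => {v}, fun _ => Set.singleton_subset_iff.mpr hv, fun _ => ?_, ?_, ?_⟩
  · rw [induce_singleton_eq_top]; exact connected_top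
  all_goals exact fun i j hij => absurd (Subsingleton.elim i j) hij

lemma cons (h : HasCliqueMinorIn G T k) (hD : (G.induce D).Connected) (hDT : Disjoint D T)
    (hdom : ∀ v ∈ T, ∃ d ∈ D, G.Adj v d) : HasCliqueMinorIn G (D ∪ T) (k + 1) := by
  obtain ⟨X, hXT, hconn, hdisj, hadj⟩ := h
  have hDX : ∀ i, ∃ a ∈ D, ∃ b ∈ X i, G.Adj a b := fun i =>
    let ⟨b, hb⟩ := (hconn i).nonempty
    let ⟨d, hd, hbd⟩ := hdom b (hXT i hb)
    ⟨d, hd, b, hb, hbd.symm⟩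
  have hDXi : ∀ i, Disjoint D (X i) := fun i => hDT.mono_right (hXT i)
  refine ⟨(Fin.cons D X : Fin (k + 1) → Set V), Fin.cases Set.subset_union_left
    fun i => (hXT i).trans Set.subset_union_right, Fin.cases hD hconn,
    Fin.cases (Fin.cases (absurd rfl) fun j _ => hDXi j)
      fun i => Fin.cases (fun _ => (hDXi i).symm) fun j hij => hdisj i j (ne_of_apply_ne _ hij),
    Fin.cases (Fin.cases (absurd rfl) fun j _ => hDX j)
      fun i => Fin.cases (fun _ => ?_) fun j hij => hadj i j (ne_of_apply_ne _ hij)⟩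
  obtain ⟨a, ha, b, hb, hab⟩ := hDX i
  exact ⟨b, hb, a, ha, hab.symm⟩

end HasCliqueMinorIn

section DuchetMeyniel

variable [Finite V]

lemma ncard_le_of_connected_dominating {t : ℕ}
    (ih : ∀ T : Set V, ¬ HasCliqueMinorIn G T (t + 1) → T.ncard ≤ 2 * t * indepNumOn G T)
    {A D : Set V} (hA : ¬ HasCliqueMinorIn G A (t + 2)) (hDA : D ⊆ A)
    (hD : (G.induce D).Connected) (hDcard : D.ncard ≤ 2 * indepNumOn G D)
    (hdom : ∀ v ∈ A \ D, ∃ d ∈ D, G.Adj v d) :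
    A.ncard ≤ 2 * (t + 1) * indepNumOn G A := by
  have hrest : (A \ D).ncard ≤ 2 * t * indepNumOn G (A \ D) := ih _ fun h => hA <| by
    simpa [Set.union_sdiff_cancel hDA] using h.cons hD Set.disjoint_sdiff_right hdom
  have hαD := indepNumOn_mono (G := G) hDA
  have hαrest := indepNumOn_mono (G := G) (Set.sdiff_subset : A \ D ⊆ A)
  have hsplit := Set.ncard_sdiff_add_ncard_of_subset hDA
  nlinarith

theorem ncard_le_two_mul_indepNumOn_of_not_hasCliqueMinorIn (t : ℕ) {S : Set V}
    (h : ¬ HasCliqueMinorIn G S (t + 1)) : S.ncard ≤ 2 * t * indepNumOn G S := by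
  induction t generalizing S with
  | zero =>
    rw [Set.not_nonempty_iff_eq_empty.mp (mt HasCliqueMinorIn.of_nonempty h)]
    simp
  | succ t ih =>
    induction S using WellFoundedLT.induction with | ind S ihS
    rcases S.eq_empty_or_nonempty with rfl | hS
    · simp
    obtain ⟨D, hDS, hD, hDcard, hiso⟩ := exists_connected_closedNbhd_isolated (G := G) hS
    have hA : (S ∩ closedNbhdSet G D).ncard ≤
        2 * (t + 1) * indepNumOn G (S ∩ closedNbhdSet G D) :=
      ncard_le_of_connected_dominating (fun _ => ih) (fun h' => h (h'.mono Set.inter_subset_left))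
        (Set.subset_inter hDS Set.subset_union_left) hD hDcard
        fun v ⟨⟨_, hv⟩, hvD⟩ => hv.resolve_left hvD
    have hR : (S \ closedNbhdSet G D).ncard ≤
        2 * (t + 1) * indepNumOn G (S \ closedNbhdSet G D) := by
      obtain ⟨d, hd⟩ := hD.nonempty
      exact ihS _ ((Set.ssubset_iff_of_subset Set.sdiff_subset).mpr
        ⟨d, hDS hd, fun h => h.2 (Or.inl hd)⟩) fun h' => h (h'.mono Set.sdiff_subset)
    have hα := indepNumOn_add_indepNumOn_le_union (G := G)
      (Set.disjoint_sdiff_inter.symm : Disjoint (S ∩ closedNbhdSet G D) (S \ closedNbhdSet G D))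
      fun u hu v hv huv => hiso v hv u hu huv.symm
    rw [Set.inter_union_sdiff] at hα
    have hsplit := Set.ncard_inter_add_ncard_sdiff_eq_ncard S (closedNbhdSet G D)
    nlinarith

end DuchetMeyniel

end

/-- Duchet–Meyniel: if `G` has no `K_t` minor, then every non-empty
subgraph `H` satisfies `|V(H)| ≤ 2(t−1)·α(H)`; equivalently `ρ(G) ≤ 2(t−1)`. -/
theorem stmt_15 {V : Type*} [Fintype V] (G : SimpleGraph V) (t : ℕ) (ht : 1 ≤ t)
    (hG : ¬ HasMinor G (⊤ : SimpleGraph (Fin t))) :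
    (∀ H : G.Subgraph, H.verts.Nonempty →
      H.verts.ncard ≤ 2 * (t - 1) * _root_.indepNum H.coe) ∧
    hallRatio G ≤ 2 * ((t : ℝ) - 1) := by
  obtain ⟨s, rfl⟩ : ∃ s, t = s + 1 := ⟨t - 1, by omega⟩
  have hbound (S : Set V) : S.ncard ≤ 2 * s * indepNumOn G S :=
    ncard_le_two_mul_indepNumOn_of_not_hasCliqueMinorIn s fun h => hG h.hasMinor
  simp only [Nat.add_sub_cancel, Nat.cast_add, Nat.cast_one, add_sub_cancel_right]
  refine ⟨fun H _ => (hbound H.verts).trans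
    (Nat.mul_le_mul_left _ (indepNumOn_le_indepNum_coe H)), Real.sSup_le ?_ (by positivity)⟩
  rintro x ⟨S, -, rfl⟩
  refine div_le_of_le_mul₀ (Nat.cast_nonneg _) (by positivity) ?_
  exact_mod_cast hbound S
end

section
/- Let G be a graph and X, Y ⊆ V(G) disjoint with |X| ≤ |Y|. Assume the bipartite-density theorem: there is C ≥ 1 such that for every t ≥ 3, every bipartite K_t-minor-free graph with parts S, T satisfies e ≤ C·t·√(log t)·√(|S||T|) + (t−2)(|S|+|T|). If G is K_t-minor-free with t ≥ 3, t ≤ k, and every vertex of Y has at least 3C·k neighbors in X where k ≥ t, then |Y| ≤ (log t)·|X|·(t/k)². -/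
/-!
The edges of `G` between `X` and `Y` form a `K_t`-minor-free bipartite graph with at least
`3Ck|Y|` edges. Since `t - 2 ≤ Ck` and `|X| ≤ |Y|`, the linear term of the density bound is at
most `2Ck|Y|`, which leaves `Ck|Y| ≤ Ct √(log t) √(|X||Y|)`; squaring and dividing by `|Y|`
gives `|Y| k² ≤ t² log t |X|`.
-/

open SimpleGraph

theorem HasMinor.map {V V' U : Type*} {G : SimpleGraph V} {G' : SimpleGraph V'}
    {H : SimpleGraph U} (f : G →g G') (hf : Function.Injective f) (h : HasMinor G H) :
    HasMinor G' H := by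
  obtain ⟨B, hconn, hdisj, hedge⟩ := h
  refine ⟨fun u => f '' B u, fun u => ?_, fun u₁ u₂ hne => ?_, fun u₁ u₂ hadj => ?_⟩
  · let φ : G.induce (B u) →g G'.induce (f '' B u) :=
      ⟨fun a => ⟨f a, a, a.2, rfl⟩, f.map_rel⟩
    exact (hconn u).map φ (by rintro ⟨-, a, ha, rfl⟩; exact ⟨⟨a, ha⟩, rfl⟩)
  · exact (Set.disjoint_image_iff hf).mpr (hdisj u₁ u₂ hne)
  · obtain ⟨a, ha, b, hb, hab⟩ := hedge u₁ u₂ hadj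
    exact ⟨f a, Set.mem_image_of_mem f ha, f b, Set.mem_image_of_mem f hb, f.map_rel hab⟩

/-- The unbalanced bipartite density theorem of Norin–Postle, with constant `C`. -/
def BipartiteDensityBound.{u} (C : ℝ) : Prop :=
  ∀ (W : Type u) [Fintype W] (G' : SimpleGraph W) (S T : Set W)
      (t : ℕ), 3 ≤ t → ¬ HasMinor G' (⊤ : SimpleGraph (Fin t)) →
      Disjoint S T → S ∪ T = Set.univ →
      (∀ u v, G'.Adj u v → (u ∈ S ∧ v ∈ T) ∨ (u ∈ T ∧ v ∈ S)) →
      (G'.edgeSet.ncard : ℝ) ≤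
        C * t * Real.sqrt (Real.log t) * Real.sqrt ((S.ncard : ℝ) * (T.ncard : ℝ)) +
          ((t : ℝ) - 2) * ((S.ncard : ℝ) + (T.ncard : ℝ))

theorem ncard_edgeSet_induce_of_support_subset {V : Type*} [Finite V] {G : SimpleGraph V}
    {s : Set V} (h : G.support ⊆ s) : (G.induce s).edgeSet.ncard = G.edgeSet.ncard := by
  classical
  have := Fintype.ofFinite V
  simp only [← coe_edgeFinset, Set.ncard_coe_finset]
  exact card_edgeFinset_induce_of_support_subset h

theorem ncard_preimage_subtype_val {V : Type*} {s t : Set V} (h : t ⊆ s) :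
    (Subtype.val ⁻¹' t : Set s).ncard = t.ncard :=
  Set.ncard_preimage_of_injective_subset_range Subtype.val_injective (by simpa using h)

theorem BipartiteDensityBound.ncard_edgeSet_le.{u} {C : ℝ} (hC : BipartiteDensityBound.{u} C)
    {V : Type u} [Fintype V] {H : SimpleGraph V} {S T : Set V} (hST : H.IsBipartiteWith S T)
    {t : ℕ} (ht : 3 ≤ t) (hH : ¬ HasMinor H (⊤ : SimpleGraph (Fin t))) :
    (H.edgeSet.ncard : ℝ) ≤
      C * t * Real.sqrt (Real.log t) * Real.sqrt ((S.ncard : ℝ) * (T.ncard : ℝ)) +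
        ((t : ℝ) - 2) * ((S.ncard : ℝ) + (T.ncard : ℝ)) := by
  classical
  have hbound := hC (S ∪ T : Set V) (H.induce (S ∪ T))
    (Subtype.val ⁻¹' S) (Subtype.val ⁻¹' T) t ht
    (fun h => hH (h.map (Embedding.induce (S ∪ T)).toHom (Embedding.induce (G := H) _).injective))
    (hST.disjoint.preimage _) (by rw [← Set.preimage_union, Subtype.coe_preimage_self])
    (fun _ _ hadj => hST.mem_of_adj hadj)
  rwa [ncard_edgeSet_induce_of_support_subset (isBipartiteWith_support_subset hST),
    ncard_preimage_subtype_val Set.subset_union_left,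
    ncard_preimage_subtype_val Set.subset_union_right] at hbound

theorem neighborSet_between_of_mem_right {V : Type*} {G : SimpleGraph V} {X Y : Set V}
    (hXY : Disjoint X Y) {y : V} (hy : y ∈ Y) :
    (G.between X Y).neighborSet y = {x ∈ X | G.Adj y x} := by
  ext x
  simp only [mem_neighborSet, between_adj, Set.mem_ofPred_eq]
  have := hXY.notMem_of_mem_right hy
  tauto

theorem mul_ncard_le_ncard_edgeSet_between {V : Type*} [Fintype V] {G : SimpleGraph V}
    {X Y : Set V} (hXY : Disjoint X Y) {d : ℝ}
    (hdeg : ∀ y ∈ Y, d ≤ ({x ∈ X | G.Adj y x}.ncard : ℝ)) :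
    d * Y.ncard ≤ (G.between X Y).edgeSet.ncard := by
  classical
  have hbip : (G.between X Y).IsBipartiteWith (↑X.toFinset) (↑Y.toFinset) := by
    simpa using between_isBipartiteWith hXY
  rw [← coe_edgeFinset, Set.ncard_coe_finset, ← isBipartiteWith_sum_degrees_eq_card_edges' hbip,
    Set.ncard_eq_toFinset_card', Nat.cast_sum, mul_comm, ← nsmul_eq_mul, ← Finset.sum_const]
  refine Finset.sum_le_sum fun y hy => ?_
  rw [← card_neighborSet_eq_degree, ← Nat.card_eq_fintype_card, Nat.card_coe_set_eq,
    neighborSet_between_of_mem_right hXY (Set.mem_toFinset.mp hy)]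
  exact hdeg y (Set.mem_toFinset.mp hy)

theorem le_mul_sq_div_of_edge_bounds {C k t L P Q E : ℝ} (hC : 1 ≤ C) (ht : 0 < t)
    (htk : t ≤ k) (hL : 0 ≤ L) (hP : 0 ≤ P) (hPQ : P ≤ Q) (hlow : 3 * C * k * Q ≤ E)
    (hup : E ≤ C * t * Real.sqrt L * Real.sqrt (P * Q) + (t - 2) * (P + Q)) :
    Q ≤ L * P * (t / k) ^ 2 := by
  have hk : 0 < k := ht.trans_le htk
  obtain hQ | hQ := (hP.trans hPQ).eq_or_lt
  · rw [← hQ]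
    positivity
  have hlinear : (t - 2) * (P + Q) ≤ C * k * (2 * Q) :=
    calc (t - 2) * (P + Q) ≤ C * k * (P + Q) :=
          mul_le_mul_of_nonneg_right (by nlinarith) (by positivity)
      _ ≤ C * k * (2 * Q) := mul_le_mul_of_nonneg_left (by linarith) (by positivity)
  have hroot : k * Q ≤ t * Real.sqrt L * Real.sqrt (P * Q) :=
    le_of_mul_le_mul_left (by nlinarith) (by positivity : 0 < C)
  have hsquare : (k * Q) ^ 2 ≤ t ^ 2 * L * P * Q :=
    calc (k * Q) ^ 2 ≤ (t * Real.sqrt L * Real.sqrt (P * Q)) ^ 2 :=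
          pow_le_pow_left₀ (by positivity) hroot 2
      _ = t ^ 2 * L * P * Q := by
          rw [mul_pow, mul_pow, Real.sq_sqrt hL, Real.sq_sqrt (by positivity)]
          ring
  rw [div_pow, ← mul_div_assoc, le_div_iff₀ (by positivity)]
  nlinarith

/-- assuming the unbalanced bipartite density theorem with constant
`C`, if every vertex of `Y` has at least `3C·k` neighbours in `X` (with `X`, `Y`
disjoint, `|X| ≤ |Y|`, `G` `K_t`-minor-free, `k ≥ t ≥ 3`), then
`|Y| ≤ (log t)·|X|·(t/k)²`. -/
theorem stmt_18 (C : ℝ) (hC : 1 ≤ C)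
    (bipDensity : ∀ (W : Type u) [Fintype W] (G' : SimpleGraph W) (S T : Set W)
      (t : ℕ), 3 ≤ t → ¬ HasMinor G' (⊤ : SimpleGraph (Fin t)) →
      Disjoint S T → S ∪ T = Set.univ →
      (∀ u v, G'.Adj u v → (u ∈ S ∧ v ∈ T) ∨ (u ∈ T ∧ v ∈ S)) →
      (G'.edgeSet.ncard : ℝ) ≤
        C * t * Real.sqrt (Real.log t) * Real.sqrt ((S.ncard : ℝ) * (T.ncard : ℝ)) +
          ((t : ℝ) - 2) * ((S.ncard : ℝ) + (T.ncard : ℝ)))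
    {V : Type u} [Fintype V] (G : SimpleGraph V) (t k : ℕ) (ht : 3 ≤ t)
    (htk : t ≤ k) (hG : ¬ HasMinor G (⊤ : SimpleGraph (Fin t)))
    (X Y : Set V) (hXY : Disjoint X Y) (hcard : X.ncard ≤ Y.ncard)
    (hdeg : ∀ y ∈ Y, 3 * C * (k : ℝ) ≤ ({x ∈ X | G.Adj y x}.ncard : ℝ)) :
    (Y.ncard : ℝ) ≤ Real.log t * (X.ncard : ℝ) * ((t : ℝ) / (k : ℝ)) ^ 2 := by
  have hminor : ¬ HasMinor (G.between X Y) (⊤ : SimpleGraph (Fin t)) := fun h =>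
    hG (h.map (Hom.ofLE between_le) Function.injective_id)
  have ht₀ : (3 : ℝ) ≤ t := by exact_mod_cast ht
  exact le_mul_sq_div_of_edge_bounds hC (by positivity) (by exact_mod_cast htk)
    (Real.log_nonneg (by linarith)) (by positivity) (by exact_mod_cast hcard)
    (mul_ncard_le_ncard_edgeSet_between hXY hdeg)
    (BipartiteDensityBound.ncard_edgeSet_le bipDensity (between_isBipartiteWith hXY) ht hminor)
end
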